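/- arXiv:2506.20797 — 6 statements merged into one kernel-verified Lean document; each statement's English description precedes it below -/
import Mathlib

section
/- Let μ be an S-valued measure on the countable atomless Boolean algebra 𝔹 satisfying the 4 elements property (4EP). Then μ is ultrahomogeneous: every partial μ-isomorphism defined on a finite Boolean subalgebra of 𝔹 extends to a μ-automorphism of 𝔹. -/
variable {B : Type*} [BooleanAlgebra B] {S : Type*} [AddCommMonoid S]

/-- An `S`-valued finitely additive measure on the Boolean algebra `B`. -/
def IsBAMeasure (μ : B → S) : Prop :=
  μ ⊥ = 0 ∧ ∀ a b : B, Disjoint a b → μ (a ⊔ b) = μ a + μ b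

/-- An element is proper if it differs from `⊥` and `⊤`. -/
def IsProperElem (a : B) : Prop := a ≠ ⊥ ∧ a ≠ ⊤

/-- `{a, b, c}` is a partition of `B` into three nonzero pairwise disjoint pieces. -/
def IsPartition3 (a b c : B) : Prop :=
  a ≠ ⊥ ∧ b ≠ ⊥ ∧ c ≠ ⊥ ∧ Disjoint a b ∧ Disjoint a c ∧ Disjoint b c ∧ a ⊔ b ⊔ c = ⊤

/-- A Boolean automorphism `φ` preserves the measure `μ`. -/
def PreservesMeas (μ : B → S) (φ : B ≃o B) : Prop := ∀ x : B, μ (φ x) = μ x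

/-- `μ` is homogeneous: every partial `μ`-isomorphism on a 4-element subalgebra
(equivalently, determined by proper `a ↦ b` with `μ a = μ b`, `μ aᶜ = μ bᶜ`)
extends to a `μ`-automorphism. -/
def MeasHomogeneous (μ : B → S) : Prop :=
  ∀ a b : B, IsProperElem a → IsProperElem b → μ a = μ b → μ aᶜ = μ bᶜ →
    ∃ φ : B ≃o B, PreservesMeas μ φ ∧ φ a = b

/-- The 4 elements property (4EP). -/
def MeasHas4EP (μ : B → S) : Prop :=
  ∀ a b c d : B, IsPartition3 a b c → μ a + μ b = μ d → μ c = μ dᶜ →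
    ∃ p q : B, IsProperElem p ∧ IsProperElem q ∧ Disjoint p q ∧
      μ p = μ a ∧ μ q = μ b ∧ p ⊔ q = d

/-- The trinary spectrum of a measure. -/
def TrinarySpectrum (μ : B → S) : Set (S × S × S) :=
  {t | ∃ a b c : B, IsPartition3 a b c ∧ t = (μ a, μ b, μ c)}

/-- `A` is a Boolean subalgebra of `B`. -/
structure IsBoolSubalg (A : Set B) : Prop where
  bot_mem : ⊥ ∈ A
  top_mem : ⊤ ∈ A
  sup_mem : ∀ {x y : B}, x ∈ A → y ∈ A → x ⊔ y ∈ A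
  inf_mem : ∀ {x y : B}, x ∈ A → y ∈ A → x ⊓ y ∈ A
  compl_mem : ∀ {x : B}, x ∈ A → xᶜ ∈ A

/-- `h` is a partial `μ`-isomorphism defined on the Boolean subalgebra `A`:
an injective Boolean algebra homomorphism on `A` preserving `μ`. -/
structure IsPartialMeasIso (μ : B → S) (A : Set B) (h : B → B) : Prop where
  subalg : IsBoolSubalg A
  injOn : Set.InjOn h A
  map_bot : h ⊥ = ⊥
  map_top : h ⊤ = ⊤
  map_sup : ∀ {x y : B}, x ∈ A → y ∈ A → h (x ⊔ y) = h x ⊔ h y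
  map_inf : ∀ {x y : B}, x ∈ A → y ∈ A → h (x ⊓ y) = h x ⊓ h y
  map_compl : ∀ {x : B}, x ∈ A → h xᶜ = (h x)ᶜ
  meas_eq : ∀ {x : B}, x ∈ A → μ (h x) = μ x


/-!
A finite partial `μ`-isomorphism is recorded as a pair of finite partitions of `⊤` whose blocks
`left i ↦ right i` are matched (equal measure, and `⊥` only together). (4EP) is exactly what is
needed to split a matched block `(a, b)` along an arbitrary `x`: applied to the partition
`{a ⊓ x, a \ x, aᶜ}` and to `d = b`, it cuts `b` into two pieces matching `a ⊓ x` and `a \ x`.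
Refining alternately on the left and on the right along an enumeration of the countable algebra,
every element eventually becomes a union of blocks on both sides; the maps read off at the finite
stages agree with each other and glue to a measure-preserving automorphism (back and forth).
-/

open Finset Function

theorem IsBAMeasure.map_finset_sup {μ : B → S} (hμ : IsBAMeasure μ) {ι : Type*} {s : Finset ι}
    {f : ι → B} (hf : (s : Set ι).PairwiseDisjoint f) : μ (s.sup f) = ∑ i ∈ s, μ (f i) := by
  induction s using Finset.cons_induction with
  | empty => simpa using hμ.1
  | cons a s ha ih =>
    rw [coe_cons, Set.pairwiseDisjoint_insert] at hf
    have hdisj : Disjoint (f a) (s.sup f) :=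
      Finset.disjoint_sup_right.2 fun j hj => hf.2 j hj fun h => ha (h ▸ hj)
    rw [sup_cons, sum_cons, hμ.2 _ _ hdisj, ih hf.1]

structure IsMatchedPair {T : Type*} (μ : B → T) (a b : B) : Prop where
  measure_eq : μ a = μ b
  eq_bot_iff : a = ⊥ ↔ b = ⊥

theorem IsMatchedPair.refl {T : Type*} (μ : B → T) (a : B) : IsMatchedPair μ a a := ⟨rfl, Iff.rfl⟩

theorem IsMatchedPair.symm {T : Type*} {μ : B → T} {a b : B} (h : IsMatchedPair μ a b) :
    IsMatchedPair μ b a :=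
  ⟨h.measure_eq.symm, h.eq_bot_iff.symm⟩

structure IsMatchingSplit {T : Type*} (μ : B → T) (x a b c : B) : Prop where
  le : c ≤ b
  inf : IsMatchedPair μ (a ⊓ x) c
  sdiff : IsMatchedPair μ (a \ x) (b \ c)

theorem exists_isMatchingSplit {μ : B → S} (hμ : IsBAMeasure μ) (h4 : MeasHas4EP μ) {a b : B}
    (hab : IsMatchedPair μ a b) (hcompl : μ aᶜ = μ bᶜ) (htop : a = ⊤ → b = ⊤) (x : B) :
    ∃ c, IsMatchingSplit μ x a b c := by
  by_cases hax : a ⊓ x = ⊥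
  · refine ⟨⊥, bot_le, ⟨by rw [hax], by simp [hax]⟩, ?_⟩
    rwa [(disjoint_iff.2 hax).sdiff_eq_left, sdiff_bot]
  by_cases hxa : a \ x = ⊥
  · refine ⟨b, le_rfl, ?_, ⟨by rw [hxa, sdiff_self], by simp [hxa]⟩⟩
    rwa [inf_eq_left.2 (sdiff_eq_bot_iff.1 hxa)]
  by_cases ha : a = ⊤
  -- no third block is available for (4EP), but then `b = ⊤` as well
  · obtain rfl := htop ha
    subst ha
    exact ⟨x, le_top, by rw [top_inf_eq]; exact .refl μ x, .refl μ _⟩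
  have hpart : IsPartition3 (a ⊓ x) (a \ x) aᶜ :=
    ⟨hax, hxa, fun h => ha (compl_eq_bot.1 h), disjoint_inf_sdiff,
      disjoint_compl_right.mono_left inf_le_left, disjoint_compl_right.mono_left sdiff_le,
      by rw [sup_inf_sdiff, sup_compl_eq_top]⟩
  obtain ⟨p, q, hp, hq, hpq, hμp, hμq, rfl⟩ :=
    h4 _ _ _ b hpart (by rw [← hμ.2 _ _ disjoint_inf_sdiff, sup_inf_sdiff, hab.measure_eq]) hcompl
  refine ⟨p, le_sup_left, ⟨hμp.symm, iff_of_false hax hp.1⟩, ?_⟩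
  rw [hpq.sup_sdiff_cancel_left]
  exact ⟨hμq.symm, iff_of_false hxa hq.1⟩

section SplitBlocks

variable {ι : Type*} {f g h : ι → B}

theorem pairwise_disjoint_sum_elim (hh : Pairwise (Disjoint on h)) (hf : ∀ i, f i ≤ h i)
    (hg : ∀ i, g i ≤ h i) (hfg : ∀ i, Disjoint (f i) (g i)) :
    Pairwise (Disjoint on Sum.elim f g) := by
  have disjoint_of_le : ∀ {i j : ι} {u v : B}, u ≤ h i → v ≤ h j → (i = j → Disjoint u v) → Disjoint u v := by
    intro i j u v hu hv hij
    rcases eq_or_ne i j with rfl | hne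
    exacts [hij rfl, (hh hne).mono hu hv]
  rintro (i | i) (j | j) hne
  · exact disjoint_of_le (hf i) (hf j) fun hij => absurd (congrArg Sum.inl hij) hne
  · exact disjoint_of_le (hf i) (hg j) fun hij => hij ▸ hfg i
  · exact disjoint_of_le (hg i) (hf j) fun hij => hij ▸ (hfg i).symm
  · exact disjoint_of_le (hg i) (hg j) fun hij => absurd (congrArg Sum.inr hij) hne

theorem sup_univ_sum_elim [Fintype ι] (hfg : ∀ i, f i ⊔ g i = h i) :
    univ.sup (Sum.elim f g) = univ.sup h := by
  rw [← univ_disjSum_univ, sup_disjSum, ← sup_sup]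
  exact congrArg _ (funext hfg)

end SplitBlocks

/-- Two partitions of `⊤` into blocks indexed by `ι`, with `left i` and `right i` matched.
It encodes the partial isomorphism `left i ↦ right i` on the finite subalgebra generated by the
left blocks. -/
structure MatchedPartition {T : Type*} (μ : B → T) where
  ι : Type
  [fintype : Fintype ι]
  left : ι → B
  right : ι → B
  pairwise_disjoint_left : Pairwise (Disjoint on left)
  pairwise_disjoint_right : Pairwise (Disjoint on right)
  sup_left : univ.sup left = ⊤
  sup_right : univ.sup right = ⊤
  isMatchedPair : ∀ i, IsMatchedPair μ (left i) (right i)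

namespace MatchedPartition

attribute [instance] fintype

section

variable {T : Type*} {μ : B → T} (P Q : MatchedPartition μ) {x y : B}

def symm : MatchedPartition μ where
  ι := P.ι
  left := P.right
  right := P.left
  pairwise_disjoint_left := P.pairwise_disjoint_right
  pairwise_disjoint_right := P.pairwise_disjoint_left
  sup_left := P.sup_right
  sup_right := P.sup_left
  isMatchedPair i := (P.isMatchedPair i).symm

def indiscrete (μ : B → T) : MatchedPartition μ where
  ι := Unit
  left _ := ⊤
  right _ := ⊤
  pairwise_disjoint_left := Subsingleton.pairwise
  pairwise_disjoint_right := Subsingleton.pairwise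
  sup_left := by simp
  sup_right := by simp
  isMatchedPair _ := .refl μ ⊤

/-- `x` is a union of left blocks. -/
def Decides (x : B) : Prop := ∀ i, P.left i ≤ x ∨ Disjoint (P.left i) x

open scoped Classical in
noncomputable def map (x : B) : B := (univ.filter fun i => P.left i ≤ x).sup P.right

theorem right_eq_bot {i : P.ι} (h : P.left i = ⊥) : P.right i = ⊥ :=
  (P.isMatchedPair i).eq_bot_iff.1 h

theorem left_eq_bot {i : P.ι} (h : P.right i = ⊥) : P.left i = ⊥ :=
  (P.isMatchedPair i).eq_bot_iff.2 h

theorem right_le_map {i : P.ι} (h : P.left i ≤ x) : P.right i ≤ P.map x := by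
  classical
  exact le_sup (f := P.right) (mem_filter.2 ⟨mem_univ i, h⟩)

theorem disjoint_right_map {i : P.ι} (h : Disjoint (P.left i) x) :
    Disjoint (P.right i) (P.map x) := by
  classical
  by_cases hi : P.left i ≤ x
  · rw [P.right_eq_bot (h.eq_bot_of_le hi)]
    exact disjoint_bot_left
  · refine Finset.disjoint_sup_right.2 fun j hj => P.pairwise_disjoint_right ?_
    rintro rfl
    exact hi (mem_filter.1 hj).2

theorem le_of_forall_inf_right_le (h : ∀ i, y ⊓ P.right i ≤ x) : y ≤ x :=
  calc y = univ.sup fun i => y ⊓ P.right i := by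
        rw [← sup_inf_distrib_left, P.sup_right, inf_top_eq]
    _ ≤ x := Finset.sup_le fun i _ => h i

theorem map_eq_of_forall (hx : P.Decides x) (hle : ∀ i, P.left i ≤ x → P.right i ≤ y)
    (hdisj : ∀ i, Disjoint (P.left i) x → Disjoint (P.right i) y) : P.map x = y := by
  classical
  refine le_antisymm (Finset.sup_le fun i hi => hle i (mem_filter.1 hi).2)
    (P.le_of_forall_inf_right_le fun i => ?_)
  rcases hx i with hi | hi
  · exact inf_le_right.trans (P.right_le_map hi)
  · exact (hdisj i hi).symm.eq_bot.le.trans bot_le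

theorem sup_filter_left (hx : P.Decides x) [DecidablePred fun i => P.left i ≤ x] :
    (univ.filter fun i => P.left i ≤ x).sup P.left = x := by
  refine le_antisymm (Finset.sup_le fun i hi => (mem_filter.1 hi).2)
    (P.symm.le_of_forall_inf_right_le fun i => ?_)
  rcases hx i with hi | hi
  · exact inf_le_right.trans (le_sup (f := P.left) (mem_filter.2 ⟨mem_univ i, hi⟩))
  · exact hi.symm.eq_bot.le.trans bot_le

theorem decides_left (i : P.ι) : P.Decides (P.left i) := fun j => by
  rcases eq_or_ne j i with rfl | hji
  exacts [Or.inl le_rfl, Or.inr (P.pairwise_disjoint_left hji)]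

theorem Decides.sup {P : MatchedPartition μ} (hx : P.Decides x) (hy : P.Decides y) :
    P.Decides (x ⊔ y) := fun i => by
  rcases hx i with hix | hix
  · exact Or.inl (le_sup_of_le_left hix)
  rcases hy i with hiy | hiy
  · exact Or.inl (le_sup_of_le_right hiy)
  · exact Or.inr (disjoint_sup_right.2 ⟨hix, hiy⟩)

theorem Decides.compl {P : MatchedPartition μ} (hx : P.Decides x) : P.Decides xᶜ := fun i =>
  (hx i).symm.imp le_compl_iff_disjoint_right.2 disjoint_compl_right_iff.2

theorem map_sup (hx : P.Decides x) (hy : P.Decides y) : P.map (x ⊔ y) = P.map x ⊔ P.map y := by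
  refine P.map_eq_of_forall (hx.sup hy) (fun i hi => ?_) fun i hi => ?_
  · rcases hx i with hix | hix
    · exact le_sup_of_le_left (P.right_le_map hix)
    · exact le_sup_of_le_right (P.right_le_map (hix.left_le_of_le_sup_left hi))
  · rw [disjoint_sup_right] at hi ⊢
    exact ⟨P.disjoint_right_map hi.1, P.disjoint_right_map hi.2⟩

theorem map_compl (hx : P.Decides x) : P.map xᶜ = (P.map x)ᶜ :=
  P.map_eq_of_forall hx.compl
    (fun _ hi => le_compl_iff_disjoint_right.2
      (P.disjoint_right_map (le_compl_iff_disjoint_right.1 hi)))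
    fun _ hi => disjoint_compl_right_iff.2 (P.right_le_map (disjoint_compl_right_iff.1 hi))

theorem map_left (i : P.ι) : P.map (P.left i) = P.right i := by
  refine P.map_eq_of_forall (P.decides_left i) (fun j hj => ?_) fun j hj => ?_
  · rcases eq_or_ne j i with rfl | hji
    · exact le_rfl
    · rw [P.right_eq_bot ((P.pairwise_disjoint_left hji).eq_bot_of_le hj)]
      exact bot_le
  · rcases eq_or_ne j i with rfl | hji
    · rw [P.right_eq_bot (disjoint_self.1 hj)]
      exact disjoint_bot_left
    · exact P.pairwise_disjoint_right hji

theorem map_top : P.map ⊤ = ⊤ := by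
  simp [map, P.sup_right]

theorem right_eq_top {i : P.ι} (h : P.left i = ⊤) : P.right i = ⊤ := by
  rw [← P.map_left, h, map_top]

theorem symm_decides_map (hx : P.Decides x) : P.symm.Decides (P.map x) := fun i =>
  (hx i).imp P.right_le_map P.disjoint_right_map

theorem symm_map_map (hx : P.Decides x) : P.symm.map (P.map x) = x := by
  refine P.symm.map_eq_of_forall (P.symm_decides_map hx) (fun i hi => ?_) fun i hi => ?_
  · rcases hx i with h | h
    · exact h
    · show P.left i ≤ x
      rw [P.left_eq_bot ((P.disjoint_right_map h).eq_bot_of_le hi)]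
      exact bot_le
  · rcases hx i with h | h
    · show Disjoint (P.left i) x
      rw [P.left_eq_bot (hi.eq_bot_of_le (P.right_le_map h))]
      exact disjoint_bot_left
    · exact h

def Refines (Q P : MatchedPartition μ) : Prop :=
  ∀ j, ∃ i, Q.left j ≤ P.left i ∧ Q.right j ≤ P.right i

theorem Refines.refl : P.Refines P := fun i => ⟨i, le_rfl, le_rfl⟩

variable {P Q} {R : MatchedPartition μ}

theorem Refines.trans (hRQ : R.Refines Q) (hQP : Q.Refines P) : R.Refines P := fun k => by
  obtain ⟨j, hj₁, hj₂⟩ := hRQ k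
  obtain ⟨i, hi₁, hi₂⟩ := hQP j
  exact ⟨i, hj₁.trans hi₁, hj₂.trans hi₂⟩

theorem Refines.symm (hQP : Q.Refines P) : Q.symm.Refines P.symm := fun j => by
  obtain ⟨i, hi₁, hi₂⟩ := hQP j
  exact ⟨i, hi₂, hi₁⟩

theorem Decides.of_refines (hx : P.Decides x) (hQP : Q.Refines P) : Q.Decides x := fun j => by
  obtain ⟨i, hi, -⟩ := hQP j
  exact (hx i).imp hi.trans fun h => h.mono_left hi

theorem map_eq_of_refines (hQP : Q.Refines P) (hx : P.Decides x) : Q.map x = P.map x := by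
  refine Q.map_eq_of_forall (hx.of_refines hQP) (fun j hj => ?_) fun j hj => ?_
  all_goals obtain ⟨i, hl, hr⟩ := hQP j
  · rcases hx i with hi | hi
    · exact hr.trans (P.right_le_map hi)
    · rw [Q.right_eq_bot ((hi.mono_left hl).eq_bot_of_le hj)]
      exact bot_le
  · rcases hx i with hi | hi
    · rw [Q.right_eq_bot (hj.eq_bot_of_le (hl.trans hi))]
      exact disjoint_bot_left
    · exact (P.disjoint_right_map hi).mono_left hr

variable (P)

def split (x : B) (c : P.ι → B) (hc : ∀ i, IsMatchingSplit μ x (P.left i) (P.right i) (c i)) :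
    MatchedPartition μ where
  ι := P.ι ⊕ P.ι
  left := Sum.elim (fun i => P.left i ⊓ x) fun i => P.left i \ x
  right := Sum.elim c fun i => P.right i \ c i
  pairwise_disjoint_left := pairwise_disjoint_sum_elim P.pairwise_disjoint_left
    (fun _ => inf_le_left) (fun _ => sdiff_le) fun _ => disjoint_inf_sdiff
  pairwise_disjoint_right := pairwise_disjoint_sum_elim P.pairwise_disjoint_right
    (fun i => (hc i).le) (fun _ => sdiff_le) fun _ => disjoint_sdiff_self_right
  sup_left := by rw [sup_univ_sum_elim fun i => sup_inf_sdiff _ _, P.sup_left]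
  sup_right := by rw [sup_univ_sum_elim fun i => sup_sdiff_cancel_right (hc i).le, P.sup_right]
  isMatchedPair := Sum.rec (fun i => (hc i).inf) fun i => (hc i).sdiff

variable {c : P.ι → B} (hc : ∀ i, IsMatchingSplit μ x (P.left i) (P.right i) (c i))

theorem split_refines : (P.split x c hc).Refines P :=
  Sum.rec (fun i => ⟨i, inf_le_left, (hc i).le⟩) fun i => ⟨i, sdiff_le, sdiff_le⟩

theorem decides_split : (P.split x c hc).Decides x :=
  Sum.rec (fun _ => Or.inl inf_le_right) fun _ => Or.inr disjoint_sdiff_self_left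

end

section Measure

variable {μ : B → S} (hμ : IsBAMeasure μ) (P : MatchedPartition μ) {x : B}
include hμ

theorem measure_map (hx : P.Decides x) : μ (P.map x) = μ x := by
  classical
  calc μ (P.map x) = ∑ i ∈ univ.filter fun i => P.left i ≤ x, μ (P.right i) :=
        hμ.map_finset_sup (P.pairwise_disjoint_right.set_pairwise _)
    _ = ∑ i ∈ univ.filter fun i => P.left i ≤ x, μ (P.left i) :=
        sum_congr rfl fun i _ => (P.isMatchedPair i).measure_eq.symm
    _ = μ x := by
        rw [← hμ.map_finset_sup (P.pairwise_disjoint_left.set_pairwise _), P.sup_filter_left hx]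

theorem measure_compl_left (i : P.ι) : μ (P.left i)ᶜ = μ (P.right i)ᶜ := by
  rw [← P.map_left i, ← P.map_compl (P.decides_left i),
    P.measure_map hμ (P.decides_left i).compl]

variable (h4 : MeasHas4EP μ)
include h4

theorem exists_refines_decides (x : B) : ∃ Q : MatchedPartition μ, Q.Refines P ∧ Q.Decides x := by
  choose c hc using fun i => exists_isMatchingSplit hμ h4 (P.isMatchedPair i)
    (P.measure_compl_left hμ i) (P.right_eq_top) x
  exact ⟨P.split x c hc, P.split_refines hc, P.decides_split hc⟩

theorem exists_refines_decides_symm (x : B) :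
    ∃ Q : MatchedPartition μ, Q.Refines P ∧ Q.Decides x ∧ Q.symm.Decides x := by
  obtain ⟨Q₁, hQ₁P, hQ₁x⟩ := P.exists_refines_decides hμ h4 x
  obtain ⟨Q₂, hQ₂Q₁, hQ₂x⟩ := Q₁.symm.exists_refines_decides hμ h4 x
  exact ⟨Q₂.symm, hQ₂Q₁.symm.trans hQ₁P, hQ₁x.of_refines hQ₂Q₁.symm, hQ₂x⟩

end Measure

section Limit

variable {T : Type*} {μ : B → T}

noncomputable def limMap (F : ℕ → MatchedPartition μ) (hdec : ∀ x, ∃ n, (F n).Decides x) (x : B) :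
    B :=
  (F (hdec x).choose).map x

variable {F : ℕ → MatchedPartition μ} (hF : ∀ n, (F (n + 1)).Refines (F n))
include hF

theorem refines_of_le {m n : ℕ} (hmn : m ≤ n) : (F n).Refines (F m) := by
  induction n, hmn using Nat.le_induction with
  | base => exact .refl _
  | succ n _ ih => exact (hF n).trans ih

theorem map_eq_map_of_decides {m n : ℕ} {x : B} (hm : (F m).Decides x) (hn : (F n).Decides x) :
    (F m).map x = (F n).map x := by
  rw [← map_eq_of_refines (refines_of_le hF (le_max_left m n)) hm,
    map_eq_of_refines (refines_of_le hF (le_max_right m n)) hn]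

variable (hdec : ∀ x, ∃ n, (F n).Decides x)

theorem limMap_eq {n : ℕ} {x : B} (hn : (F n).Decides x) : limMap F hdec x = (F n).map x :=
  map_eq_map_of_decides hF (hdec x).choose_spec hn

theorem limMap_sup (x y : B) : limMap F hdec (x ⊔ y) = limMap F hdec x ⊔ limMap F hdec y := by
  obtain ⟨m, hm⟩ := hdec x
  obtain ⟨n, hn⟩ := hdec y
  have hx := hm.of_refines (refines_of_le hF (le_max_left m n))
  have hy := hn.of_refines (refines_of_le hF (le_max_right m n))
  rw [limMap_eq hF hdec (hx.sup hy), map_sup _ hx hy, limMap_eq hF hdec hx, limMap_eq hF hdec hy]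

theorem monotone_limMap : Monotone (limMap F hdec) := fun x y hxy =>
  calc limMap F hdec x ≤ limMap F hdec x ⊔ limMap F hdec y := le_sup_left
    _ = limMap F hdec y := by rw [← limMap_sup hF, sup_eq_right.2 hxy]

theorem limMap_symm_limMap (hdec' : ∀ x, ∃ n, (F n).symm.Decides x) (x : B) :
    limMap (fun n => (F n).symm) hdec' (limMap F hdec x) = x := by
  obtain ⟨n, hn⟩ := hdec x
  rw [limMap_eq hF hdec hn, limMap_eq (fun n => (hF n).symm) hdec' ((F n).symm_decides_map hn),
    symm_map_map _ hn]

end Limit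

theorem exists_orderIso_of_refines {μ : B → S} (hμ : IsBAMeasure μ) {F : ℕ → MatchedPartition μ}
    (hF : ∀ n, (F (n + 1)).Refines (F n)) (hdec : ∀ x, ∃ n, (F n).Decides x)
    (hdec' : ∀ x, ∃ n, (F n).symm.Decides x) :
    ∃ φ : B ≃o B, PreservesMeas μ φ ∧ ∀ n x, (F n).Decides x → φ x = (F n).map x := by
  have hF' : ∀ n, (F (n + 1)).symm.Refines (F n).symm := fun n => (hF n).symm
  let e : B ≃ B :=
    ⟨limMap F hdec, limMap (fun n => (F n).symm) hdec', limMap_symm_limMap hF hdec hdec',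
      limMap_symm_limMap hF' hdec' hdec⟩
  exact ⟨e.toOrderIso (monotone_limMap hF hdec) (monotone_limMap hF' hdec'),
    fun x => (F _).measure_map hμ (hdec x).choose_spec, fun _ _ hn => limMap_eq hF hdec hn⟩

theorem exists_refining_seq [Countable B] {μ : B → S} (hμ : IsBAMeasure μ) (h4 : MeasHas4EP μ)
    (P : MatchedPartition μ) :
    ∃ F : ℕ → MatchedPartition μ, F 0 = P ∧ (∀ n, (F (n + 1)).Refines (F n)) ∧
      ∀ x, ∃ n, (F n).Decides x ∧ (F n).symm.Decides x := by
  obtain ⟨e, he⟩ := exists_surjective_nat B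
  choose next hnext using fun (Q : MatchedPartition μ) n =>
    Q.exists_refines_decides_symm hμ h4 (e n)
  let F : ℕ → MatchedPartition μ := fun n => Nat.rec P (fun n Q => next Q n) n
  refine ⟨F, rfl, fun n => (hnext (F n) n).1, fun x => ?_⟩
  obtain ⟨n, rfl⟩ := he x
  exact ⟨n + 1, (hnext (F n) n).2⟩

end MatchedPartition

namespace IsPartialMeasIso

variable {T : Type*} {μ : B → T} {A : Set B} {h : B → B}
  (hh : IsPartialMeasIso μ A h) {x y : B}
include hh

theorem sdiff_mem (hx : x ∈ A) (hy : y ∈ A) : x \ y ∈ A := by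
  rw [sdiff_eq]
  exact hh.subalg.inf_mem hx (hh.subalg.compl_mem hy)

theorem map_sdiff (hx : x ∈ A) (hy : y ∈ A) : h (x \ y) = h x \ h y := by
  rw [sdiff_eq, hh.map_inf hx (hh.subalg.compl_mem hy), hh.map_compl hy, sdiff_eq]

theorem monotoneOn : MonotoneOn h A := fun x hx y hy hxy =>
  calc h x ≤ h x ⊔ h y := le_sup_left
    _ = h y := by rw [← hh.map_sup hx hy, sup_eq_right.2 hxy]

theorem isMatchedPair (hx : x ∈ A) : IsMatchedPair μ x (h x) :=
  ⟨(hh.meas_eq hx).symm, ⟨fun h0 => h0 ▸ hh.map_bot,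
    fun h0 => hh.injOn hx hh.subalg.bot_mem (h0.trans hh.map_bot.symm)⟩⟩

end IsPartialMeasIso

namespace MatchedPartition

variable {T : Type*} {μ : B → T} {A : Set B} {h : B → B}
  (hh : IsPartialMeasIso μ A h)

def IsInducedBy (P : MatchedPartition μ) (A : Set B) (h : B → B) : Prop :=
  ∀ i, P.left i ∈ A ∧ P.right i = h (P.left i)

include hh

theorem map_eq_of_isInducedBy {P : MatchedPartition μ} (hP : P.IsInducedBy A h) {x : B}
    (hxA : x ∈ A) (hx : P.Decides x) : P.map x = h x :=
  P.map_eq_of_forall hx (fun i hi => (hP i).2 ▸ hh.monotoneOn (hP i).1 hxA hi) fun i hi => by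
    rw [(hP i).2, disjoint_iff, ← hh.map_inf (hP i).1 hxA, hi.eq_bot, hh.map_bot]

theorem exists_refines_decides_of_isInducedBy {P : MatchedPartition μ} (hP : P.IsInducedBy A h)
    {y : B} (hy : y ∈ A) :
    ∃ Q : MatchedPartition μ, Q.IsInducedBy A h ∧ Q.Refines P ∧ Q.Decides y := by
  have hinf : ∀ i, P.left i ⊓ y ∈ A := fun i => hh.subalg.inf_mem (hP i).1 hy
  have hsdiff : ∀ i, P.left i \ y ∈ A := fun i => hh.sdiff_mem (hP i).1 hy
  have hright : ∀ i, P.right i \ h (P.left i ⊓ y) = h (P.left i \ y) := fun i => by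
    rw [(hP i).2, ← hh.map_sdiff (hP i).1 (hinf i), sdiff_inf_self_left]
  have hc : ∀ i, IsMatchingSplit μ y (P.left i) (P.right i) (h (P.left i ⊓ y)) := fun i =>
    ⟨(hP i).2 ▸ hh.monotoneOn (hinf i) (hP i).1 inf_le_left, hh.isMatchedPair (hinf i),
      hright i ▸ hh.isMatchedPair (hsdiff i)⟩
  refine ⟨P.split y _ hc, Sum.rec (fun i => ⟨hinf i, rfl⟩) fun i => ⟨hsdiff i, hright i⟩,
    P.split_refines hc, P.decides_split hc⟩

theorem exists_decides_map_eq (hA : A.Finite) :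
    ∃ P : MatchedPartition μ, ∀ x ∈ A, P.Decides x ∧ P.map x = h x := by
  suffices ∃ P : MatchedPartition μ, P.IsInducedBy A h ∧ ∀ x ∈ A, P.Decides x by
    obtain ⟨P, hP, hdec⟩ := this
    exact ⟨P, fun x hx => ⟨hdec x hx, map_eq_of_isInducedBy hh hP hx (hdec x hx)⟩⟩
  refine hA.induction_on_subset (motive := fun t _ =>
    ∃ P : MatchedPartition μ, P.IsInducedBy A h ∧ ∀ x ∈ t, P.Decides x) _
    ⟨indiscrete μ, fun _ => ⟨hh.subalg.top_mem, hh.map_top.symm⟩, by simp⟩ ?_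
  rintro y t hy - - ⟨P, hP, hdec⟩
  obtain ⟨Q, hQ, hQP, hQy⟩ := exists_refines_decides_of_isInducedBy hh hP hy
  exact ⟨Q, hQ, Set.forall_mem_insert.2 ⟨hQy, fun x hx => (hdec x hx).of_refines hQP⟩⟩

end MatchedPartition

theorem has4EP_implies_ultrahomogeneous_general [Countable B]
    (μ : B → S) (hμ : IsBAMeasure μ) (h4 : MeasHas4EP μ) :
    ∀ (A : Set B) (h : B → B), A.Finite → IsPartialMeasIso μ A h →
      ∃ φ : B ≃o B, PreservesMeas μ φ ∧ ∀ x ∈ A, φ x = h x := by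
  intro A h hA hiso
  obtain ⟨P, hP⟩ := MatchedPartition.exists_decides_map_eq hiso hA
  obtain ⟨F, rfl, hF, hdec⟩ := P.exists_refining_seq hμ h4
  obtain ⟨φ, hφμ, hφ⟩ := MatchedPartition.exists_orderIso_of_refines hμ hF
    (fun x => (hdec x).imp fun _ => And.left) fun x => (hdec x).imp fun _ => And.right
  exact ⟨φ, hφμ, fun x hx => (hφ 0 x (hP x hx).1).trans (hP x hx).2⟩

/-- a measure with (4EP) is ultrahomogeneous: every partial
`μ`-isomorphism defined on a finite Boolean subalgebra extends to a
`μ`-automorphism. -/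
theorem has4EP_implies_ultrahomogeneous [Countable B] [Nontrivial B]
    (hatomless : ∀ a : B, a ≠ ⊥ → ∃ b : B, b ≠ ⊥ ∧ b < a)
    (μ : B → S) (hμ : IsBAMeasure μ) (h4 : MeasHas4EP μ) :
    ∀ (A : Set B) (h : B → B), A.Finite → IsPartialMeasIso μ A h →
      ∃ φ : B ≃o B, PreservesMeas μ φ ∧ ∀ x ∈ A, φ x = h x :=
  has4EP_implies_ultrahomogeneous_general μ hμ h4
end

section
/- Let μ be a homogeneous S-valued measure on 𝔹 with trinary spectrum Σ = Σ(μ). Then Σ satisfies: (Sp1) Σ is invariant under all permutations of the three coordinates; (Sp2) a+b+c = p+q+r for all (a,b,c),(p,q,r) ∈ Σ; (Sp3) if (a,b,c+d) ∈ Σ and (a+b,c,d) ∈ Σ then (a,b+c,d) ∈ Σ; and (Sp4a) for any (a,b,c) ∈ Σ there exists (x,y,z) ∈ Σ with a = x+y and z = b+c. -/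
variable {B : Type*} [BooleanAlgebra B] {S : Type*} [AddCommMonoid S]

namespace IsPartition3

variable {a b c x y : B}

theorem swap_left (h : IsPartition3 a b c) : IsPartition3 b a c := by
  obtain ⟨ha, hb, hc, hab, hac, hbc, htop⟩ := h
  exact ⟨hb, ha, hc, hab.symm, hbc, hac, by rwa [sup_comm b a]⟩

theorem swap_right (h : IsPartition3 a b c) : IsPartition3 a c b := by
  obtain ⟨ha, hb, hc, hab, hac, hbc, htop⟩ := h
  exact ⟨ha, hc, hb, hac, hab, hbc.symm, by rwa [sup_right_comm]⟩

theorem isCompl_sup (h : IsPartition3 a b c) : IsCompl (a ⊔ b) c := by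
  obtain ⟨-, -, -, -, hac, hbc, htop⟩ := h
  exact .of_eq (hac.sup_left hbc).eq_bot htop

theorem isCompl_left (h : IsPartition3 a b c) : IsCompl a (b ⊔ c) :=
  h.swap_left.swap_right.isCompl_sup.symm

theorem isProperElem_sup (h : IsPartition3 a b c) : IsProperElem (a ⊔ b) := by
  refine ⟨fun hbot => h.1 (sup_eq_bot_iff.mp hbot).1, fun htop => h.2.2.1 ?_⟩
  simpa [htop] using h.isCompl_sup.inf_eq_bot

theorem isProperElem_left (h : IsPartition3 a b c) : IsProperElem a := by
  obtain ⟨ha, hb, -, hab, -, -, -⟩ := h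
  exact ⟨ha, fun htop => hb (by simpa [htop] using hab.eq_bot)⟩

theorem split_merge (h : IsPartition3 (x ⊔ y) b c) (hx : x ≠ ⊥) (hy : y ≠ ⊥)
    (hxy : Disjoint x y) : IsPartition3 x (y ⊔ b) c := by
  obtain ⟨-, hb, hc, hxyb, hxyc, hbc, htop⟩ := h
  refine ⟨hx, fun hbot => hy (sup_eq_bot_iff.mp hbot).1, hc,
    hxy.sup_right (hxyb.mono_left le_sup_left), hxyc.mono_left le_sup_left,
    (hxyc.mono_left le_sup_right).sup_left hbc, ?_⟩
  rwa [← sup_assoc]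

theorem split_left (h : IsPartition3 (x ⊔ y) b c) (hx : x ≠ ⊥) (hy : y ≠ ⊥)
    (hxy : Disjoint x y) : IsPartition3 x y (b ⊔ c) := by
  obtain ⟨-, hb, -, hxyb, hxyc, -, htop⟩ := h
  refine ⟨hx, hy, fun hbot => hb (sup_eq_bot_iff.mp hbot).1, hxy,
    (hxyb.mono_left le_sup_left).sup_right (hxyc.mono_left le_sup_left),
    (hxyb.mono_left le_sup_right).sup_right (hxyc.mono_left le_sup_right), ?_⟩
  rwa [← sup_assoc]

theorem map (h : IsPartition3 a b c) (φ : B ≃o B) : IsPartition3 (φ a) (φ b) (φ c) := by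
  obtain ⟨ha, hb, hc, hab, hac, hbc, htop⟩ := h
  refine ⟨?_, ?_, ?_, hab.map_orderIso φ, hac.map_orderIso φ, hbc.map_orderIso φ, ?_⟩
  · simpa using ha
  · simpa using hb
  · simpa using hc
  · rw [← φ.map_sup, ← φ.map_sup, htop, φ.map_top]

end IsPartition3

section Spectrum

variable {α : Type*} {μ : B → α} {a b c : α}

theorem mem_trinarySpectrum_iff :
    (a, b, c) ∈ TrinarySpectrum μ ↔
      ∃ x y z : B, IsPartition3 x y z ∧ μ x = a ∧ μ y = b ∧ μ z = c := by
  simp only [TrinarySpectrum, Set.mem_ofPred_eq, Prod.mk.injEq, eq_comm]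

theorem swap_left_mem_trinarySpectrum (h : (a, b, c) ∈ TrinarySpectrum μ) :
    (b, a, c) ∈ TrinarySpectrum μ := by
  obtain ⟨x, y, z, hp, rfl, rfl, rfl⟩ := mem_trinarySpectrum_iff.mp h
  exact ⟨y, x, z, hp.swap_left, rfl⟩

theorem swap_right_mem_trinarySpectrum (h : (a, b, c) ∈ TrinarySpectrum μ) :
    (a, c, b) ∈ TrinarySpectrum μ := by
  obtain ⟨x, y, z, hp, rfl, rfl, rfl⟩ := mem_trinarySpectrum_iff.mp h
  exact ⟨x, z, y, hp.swap_right, rfl⟩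

end Spectrum

section MeasureSpectrum

variable {μ : B → S} {a b c : S}

theorem IsBAMeasure.add_add_eq_apply_top (hμ : IsBAMeasure μ)
    (h : (a, b, c) ∈ TrinarySpectrum μ) : a + b + c = μ ⊤ := by
  obtain ⟨x, y, z, ⟨-, -, -, hxy, hxz, hyz, htop⟩, rfl, rfl, rfl⟩ := mem_trinarySpectrum_iff.mp h
  rw [← htop, hμ.2 _ _ (hxz.sup_left hyz), hμ.2 _ _ hxy]

/-- Realise `(a, b, c + d)` by `(x, y, e)` and `(a + b, c, d)` by `(f, u, v)`. A `μ`-automorphism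
`φ` with `φ (x ⊔ y) = f` splits `f` into `φ x ⊔ φ y`, and `(φ x, φ y ⊔ u, v)` realises
`(a, b + c, d)`. -/
theorem MeasHomogeneous.regroup_mem_trinarySpectrum (hμ : IsBAMeasure μ)
    (hhom : MeasHomogeneous μ) {d : S} (h₁ : (a, b, c + d) ∈ TrinarySpectrum μ)
    (h₂ : (a + b, c, d) ∈ TrinarySpectrum μ) : (a, b + c, d) ∈ TrinarySpectrum μ := by
  obtain ⟨x, y, e, hxye, rfl, rfl, he⟩ := mem_trinarySpectrum_iff.mp h₁
  obtain ⟨f, u, v, hfuv, hf, rfl, rfl⟩ := mem_trinarySpectrum_iff.mp h₂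
  have hsup : μ (x ⊔ y) = μ f := by rw [hμ.2 _ _ hxye.2.2.2.1, hf]
  have hcompl : μ (x ⊔ y)ᶜ = μ fᶜ := by
    rw [hxye.isCompl_sup.compl_eq, hfuv.isCompl_left.compl_eq, hμ.2 _ _ hfuv.2.2.2.2.2.1, he]
  obtain ⟨φ, hφμ, hφ⟩ := hhom _ _ hxye.isProperElem_sup hfuv.isProperElem_left hsup hcompl
  have hφxy : φ x ⊔ φ y = f := by rw [← φ.map_sup, hφ]
  obtain ⟨hφx, hφy, -, hdisj, -, -, -⟩ := hxye.map φ
  have hyu : Disjoint (φ y) u := hfuv.2.2.2.1.mono_left (hφxy ▸ le_sup_right)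
  refine mem_trinarySpectrum_iff.mpr
    ⟨φ x, φ y ⊔ u, v, (hφxy ▸ hfuv).split_merge hφx hφy hdisj, hφμ x, ?_, rfl⟩
  rw [hμ.2 _ _ hyu, hφμ]

theorem exists_split_mem_trinarySpectrum (hμ : IsBAMeasure μ)
    (hatomless : ∀ a : B, a ≠ ⊥ → ∃ b : B, b ≠ ⊥ ∧ b < a)
    (h : (a, b, c) ∈ TrinarySpectrum μ) :
    ∃ x y z : S, (x, y, z) ∈ TrinarySpectrum μ ∧ a = x + y ∧ z = b + c := by
  obtain ⟨x, y, z, hxyz, rfl, rfl, rfl⟩ := mem_trinarySpectrum_iff.mp h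
  obtain ⟨u, hu, hux⟩ := hatomless x hxyz.1
  have hsplit : u ⊔ x \ u = x := sup_sdiff_cancel_right hux.le
  have hrest : x \ u ≠ ⊥ := fun hbot => hux.not_ge (sdiff_eq_bot_iff.mp hbot)
  refine ⟨μ u, μ (x \ u), μ (y ⊔ z),
    ⟨u, x \ u, y ⊔ z, (hsplit ▸ hxyz).split_left hu hrest disjoint_sdiff_self_right, rfl⟩,
    by rw [← hμ.2 _ _ disjoint_sdiff_self_right, hsplit], hμ.2 _ _ hxyz.2.2.2.2.2.1⟩

end MeasureSpectrum

theorem spectrum_axioms_general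
    (hatomless : ∀ a : B, a ≠ ⊥ → ∃ b : B, b ≠ ⊥ ∧ b < a)
    (μ : B → S) (hμ : IsBAMeasure μ) (hhom : MeasHomogeneous μ) :
    (∀ a b c : S, (a, b, c) ∈ TrinarySpectrum μ →
      (b, a, c) ∈ TrinarySpectrum μ ∧ (a, c, b) ∈ TrinarySpectrum μ ∧
      (c, b, a) ∈ TrinarySpectrum μ ∧ (b, c, a) ∈ TrinarySpectrum μ ∧
      (c, a, b) ∈ TrinarySpectrum μ) ∧
    (∀ a b c p q r : S, (a, b, c) ∈ TrinarySpectrum μ →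
      (p, q, r) ∈ TrinarySpectrum μ → a + b + c = p + q + r) ∧
    (∀ a b c d : S, (a, b, c + d) ∈ TrinarySpectrum μ →
      (a + b, c, d) ∈ TrinarySpectrum μ → (a, b + c, d) ∈ TrinarySpectrum μ) ∧
    (∀ a b c : S, (a, b, c) ∈ TrinarySpectrum μ →
      ∃ x y z : S, (x, y, z) ∈ TrinarySpectrum μ ∧ a = x + y ∧ z = b + c) := by
  refine ⟨fun a b c h => ?_, fun a b c p q r h h' => ?_,
    fun a b c d => hhom.regroup_mem_trinarySpectrum hμ,
    fun a b c => exists_split_mem_trinarySpectrum hμ hatomless⟩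
  · have h₁ := swap_left_mem_trinarySpectrum h
    have h₂ := swap_right_mem_trinarySpectrum h
    exact ⟨h₁, h₂, swap_left_mem_trinarySpectrum (swap_right_mem_trinarySpectrum h₁),
      swap_right_mem_trinarySpectrum h₁, swap_left_mem_trinarySpectrum h₂⟩
  · rw [hμ.add_add_eq_apply_top h, hμ.add_add_eq_apply_top h']

/-- the trinary spectrum of a homogeneous measure satisfies
(Sp1), (Sp2), (Sp3) and (Sp4a). -/
theorem spectrum_axioms [Countable B] [Nontrivial B]
    (hatomless : ∀ a : B, a ≠ ⊥ → ∃ b : B, b ≠ ⊥ ∧ b < a)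
    (μ : B → S) (hμ : IsBAMeasure μ) (hhom : MeasHomogeneous μ) :
    (∀ a b c : S, (a, b, c) ∈ TrinarySpectrum μ →
      (b, a, c) ∈ TrinarySpectrum μ ∧ (a, c, b) ∈ TrinarySpectrum μ ∧
      (c, b, a) ∈ TrinarySpectrum μ ∧ (b, c, a) ∈ TrinarySpectrum μ ∧
      (c, a, b) ∈ TrinarySpectrum μ) ∧
    (∀ a b c p q r : S, (a, b, c) ∈ TrinarySpectrum μ →
      (p, q, r) ∈ TrinarySpectrum μ → a + b + c = p + q + r) ∧
    (∀ a b c d : S, (a, b, c + d) ∈ TrinarySpectrum μ →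
      (a + b, c, d) ∈ TrinarySpectrum μ → (a, b + c, d) ∈ TrinarySpectrum μ) ∧
    (∀ a b c : S, (a, b, c) ∈ TrinarySpectrum μ →
      ∃ x y z : S, (x, y, z) ∈ TrinarySpectrum μ ∧ a = x + y ∧ z = b + c) :=
  spectrum_axioms_general hatomless μ hμ hhom
end

section
/- For a semigroup-valued measure μ: 𝔹 → S, the action of H = Aut(μ) on 𝔹 is transitive (respectively, minimal) if and only if for every proper j ∈ 𝔹, the action of Aut(μ↾j) on 𝔹↾j is transitive (respectively, minimal). -/
variable {B : Type*} [BooleanAlgebra B] {S : Type*} [AddCommMonoid S]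

/-- The group `Aut(μ)` acts transitively on `B`. -/
def ActsTransitively (μ : B → S) : Prop :=
  ∀ a b : B, IsProperElem a → IsProperElem b →
    ∃ φ : B ≃o B, PreservesMeas μ φ ∧ φ a ⊓ b ≠ ⊥

/-- The action of `Aut(μ)` on `B` is minimal. -/
def ActsMinimally (μ : B → S) : Prop :=
  ∀ a : B, IsProperElem a → ∃ (n : ℕ) (φ : Fin n → B ≃o B),
    (∀ i, PreservesMeas μ (φ i)) ∧ Finset.univ.sup (fun i => φ i a) = ⊤

/-- The group `Aut(μ ↾ j)` acts transitively on `B ↾ j` (automorphisms of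
`B ↾ j` preserving `μ ↾ j` are identified with automorphisms of `B` fixing `j`
and preserving `μ` below `j`). -/
def ActsTransitivelyOn (μ : B → S) (j : B) : Prop :=
  ∀ a b : B, a ≤ j → b ≤ j → a ≠ ⊥ → a ≠ j → b ≠ ⊥ → b ≠ j →
    ∃ φ : B ≃o B, (∀ x : B, x ≤ j → μ (φ x) = μ x) ∧ φ j = j ∧ φ a ⊓ b ≠ ⊥

/-- The action of `Aut(μ ↾ j)` on `B ↾ j` is minimal. -/
def ActsMinimallyOn (μ : B → S) (j : B) : Prop :=
  ∀ a : B, a ≤ j → a ≠ ⊥ → a ≠ j →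
    ∃ (n : ℕ) (φ : Fin n → B ≃o B),
      (∀ i, (∀ x : B, x ≤ j → μ (φ i x) = μ x) ∧ φ i j = j) ∧
      Finset.univ.sup (fun i => φ i a) = j

/-!
An automorphism of `B ↾ j` preserving `μ ↾ j` extends by the identity on `jᶜ` to an element
of `Aut(μ)`. Since `B` is atomless, a nonzero `b` disjoint from `a` splits as `e ⊔ e'`, and
then `j = a ⊔ e` is proper with `a` and `e` proper in `B ↾ j`; likewise a splitting
`aᶜ = e ⊔ e'` gives `⊤ = (a ⊔ e) ⊔ (a ⊔ e')`, so translates of `a` covering both pieces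
cover `⊤`. This gives the global properties from the relative ones.

Conversely, let `ψ ∈ Aut(μ)` and let `c ≤ ψ a` be disjoint from `a`, with `a, c ≤ j`. The
involution exchanging `ψ⁻¹ c ≤ a` with `c` along `ψ` and fixing everything disjoint from both
preserves `μ`, fixes `j`, and moves `a` to an element between `c` and `a ⊔ c`. Taking
`c = ψ a ⊓ b` gives relative transitivity, and `c = (j ⊓ ψ a) \ a` relative minimality, since
`y ↦ a ⊔ j ⊓ y` preserves finite joins and sends `⊤` to `j`.
-/

section SupClosure

variable {α β : Type*}

lemma image_supClosure_subset [Lattice α] [Lattice β] {f : α → β}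
    (hf : ∀ x y, f (x ⊔ y) = f x ⊔ f y) (s : Set α) :
    f '' supClosure s ⊆ supClosure (f '' s) := by
  refine Set.image_subset_iff.2 (supClosure_min (Set.image_subset_iff.1 subset_supClosure) ?_)
  intro x hx y hy
  rw [Set.mem_preimage, hf]
  exact supClosed_supClosure hx hy

lemma Finset.sup_univ_equivFin_symm [SemilatticeSup β] [OrderBot β] (s : Finset α)
    (f : α → β) :
    Finset.univ.sup (fun i => f (s.equivFin.symm i)) = s.sup f :=
  calc _ = (Finset.univ.map s.equivFin.symm.toEmbedding).sup (fun x : s => f x) :=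
        (Finset.sup_map _ _ _).symm
    _ = s.sup f := by rw [Finset.map_univ_equiv, Finset.univ_eq_attach, Finset.sup_attach]

theorem exists_fin_sup_eq_iff_mem_supClosure [Lattice β] [OrderBot β] {G : Set α} {f : α → β}
    {b : β} (hb : b ≠ ⊥) :
    (∃ (n : ℕ) (φ : Fin n → α), (∀ i, φ i ∈ G) ∧
      Finset.univ.sup (fun i => f (φ i)) = b) ↔ b ∈ supClosure (f '' G) := by
  classical
  constructor
  · rintro ⟨n, φ, hφ, rfl⟩
    have hne : (Finset.univ : Finset (Fin n)).Nonempty :=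
      Finset.nonempty_iff_ne_empty.2 fun h => hb (by rw [h, Finset.sup_empty])
    rw [← Finset.sup'_eq_sup hne]
    exact finsetSup'_mem_supClosure hne fun i _ => ⟨φ i, hφ i, rfl⟩
  · rintro ⟨t, ht, hts, rfl⟩
    obtain ⟨s, hsG, rfl⟩ := Finset.subset_set_image_iff.1 hts
    refine ⟨s.card, fun i => s.equivFin.symm i, fun i => hsG (s.equivFin.symm i).2, ?_⟩
    rw [Finset.sup'_eq_sup, Finset.sup_image, Function.id_comp, Finset.sup_univ_equivFin_symm]

end SupClosure

lemma sup_sdiff_inf_of_le {u j : B} (hu : u ≤ j) (x : B) : (u ⊔ x \ j) ⊓ j = u := by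
  rw [inf_sup_right, inf_eq_left.2 hu, inf_sdiff_self_left, sup_bot_eq]

lemma sup_sdiff_sdiff_of_le {u j : B} (hu : u ≤ j) (x : B) : (u ⊔ x \ j) \ j = x \ j := by
  rw [sup_sdiff, sdiff_eq_bot_iff.2 hu, bot_sup_eq, sdiff_idem]

lemma sup_sup_inf_of_le {u v w c : B} (hu : Disjoint u c) (hv : Disjoint v c) (hw : w ≤ c) :
    (u ⊔ v ⊔ w) ⊓ c = w := by
  rw [inf_sup_right, inf_sup_right, hu.eq_bot, hv.eq_bot, inf_eq_left.2 hw, bot_sup_eq, bot_sup_eq]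

lemma exists_disjoint_sup_eq_of_atomless
    (hatomless : ∀ a : B, a ≠ ⊥ → ∃ b : B, b ≠ ⊥ ∧ b < a) {x : B} (hx : x ≠ ⊥) :
    ∃ e e' : B, e ≠ ⊥ ∧ e' ≠ ⊥ ∧ Disjoint e e' ∧ e ⊔ e' = x := by
  obtain ⟨e, he, hex⟩ := hatomless x hx
  exact ⟨e, x \ e, he, fun h => hex.not_ge (sdiff_eq_bot_iff.1 h), disjoint_sdiff_self_right,
    sup_sdiff_cancel_right hex.le⟩

lemma isProperElem_sup_of_disjoint {a e e' : B} (ha : a ≠ ⊥) (he' : e' ≠ ⊥)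
    (h : Disjoint (a ⊔ e) e') : IsProperElem (a ⊔ e) :=
  ⟨fun h' => ha (le_bot_iff.1 (h' ▸ le_sup_left)),
    fun h' => he' (h.eq_bot_of_ge (h' ▸ le_top))⟩

lemma ne_sup_of_disjoint {a e : B} (he : e ≠ ⊥) (hae : Disjoint a e) : a ≠ a ⊔ e :=
  (left_lt_sup.2 fun h => he (hae.symm.eq_bot_of_le h)).ne

namespace OrderIso

def glueIdFun (φ : B ≃o B) (j x : B) : B := φ (x ⊓ j) ⊔ x \ j

lemma glueIdFun_symm_glueIdFun (φ : B ≃o B) {j : B} (hj : φ j = j) (x : B) :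
    glueIdFun φ.symm j (glueIdFun φ j x) = x := by
  have hle : φ (x ⊓ j) ≤ j := (φ.monotone inf_le_right).trans hj.le
  rw [glueIdFun, glueIdFun, sup_sdiff_inf_of_le hle, sup_sdiff_sdiff_of_le hle, symm_apply_apply,
    sup_inf_sdiff]

lemma glueIdFun_mono (φ : B ≃o B) (j : B) : Monotone (glueIdFun φ j) := fun _ _ h =>
  sup_le_sup (φ.monotone (inf_le_inf_right _ h)) (sdiff_le_sdiff_right h)

def glueId (φ : B ≃o B) (j : B) (hj : φ j = j) : B ≃o B :=
  Equiv.toOrderIso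
    { toFun := glueIdFun φ j
      invFun := glueIdFun φ.symm j
      left_inv := glueIdFun_symm_glueIdFun φ hj
      right_inv := fun x => by
        simpa only [symm_symm] using
          glueIdFun_symm_glueIdFun φ.symm (φ.symm_apply_eq.2 hj.symm) x }
    (glueIdFun_mono φ j) (glueIdFun_mono φ.symm j)

lemma glueId_apply (φ : B ≃o B) (j : B) (hj : φ j = j) (x : B) :
    glueId φ j hj x = φ (x ⊓ j) ⊔ x \ j := rfl

lemma glueId_apply_of_le (φ : B ≃o B) {j : B} (hj : φ j = j) {x : B} (hx : x ≤ j) :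
    glueId φ j hj x = φ x := by
  rw [glueId_apply, inf_eq_left.2 hx, sdiff_eq_bot_iff.2 hx, sup_bot_eq]

section Swap

variable {ψ : B ≃o B} {A : B}

lemma map_inf_le_map_right (x : B) : ψ (x ⊓ A) ≤ ψ A := ψ.monotone inf_le_right

lemma symm_apply_inf_map_le (x : B) : ψ.symm (x ⊓ ψ A) ≤ A :=
  (ψ.symm.monotone inf_le_right).trans (ψ.symm_apply_apply A).le

variable (ψ A) in
def swapAlongFun (x : B) : B := x \ (A ⊔ ψ A) ⊔ ψ (x ⊓ A) ⊔ ψ.symm (x ⊓ ψ A)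

variable (ψ A) in
lemma swapAlongFun_mono : Monotone (swapAlongFun ψ A) := fun _ _ h =>
  sup_le_sup (sup_le_sup (sdiff_le_sdiff_right h) (ψ.monotone (inf_le_inf_right _ h)))
    (ψ.symm.monotone (inf_le_inf_right _ h))

lemma swapAlongFun_inf_left (hA : Disjoint A (ψ A)) (x : B) :
    swapAlongFun ψ A x ⊓ A = ψ.symm (x ⊓ ψ A) :=
  sup_sup_inf_of_le (disjoint_sdiff_self_left.mono_right le_sup_left)
    (hA.symm.mono_left (map_inf_le_map_right x)) (symm_apply_inf_map_le x)

lemma swapAlongFun_inf_right (hA : Disjoint A (ψ A)) (x : B) :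
    swapAlongFun ψ A x ⊓ ψ A = ψ (x ⊓ A) := by
  rw [swapAlongFun, sup_right_comm]
  exact sup_sup_inf_of_le (disjoint_sdiff_self_left.mono_right le_sup_right)
    (hA.mono_left (symm_apply_inf_map_le x)) (map_inf_le_map_right x)

lemma swapAlongFun_sdiff (x : B) :
    swapAlongFun ψ A x \ (A ⊔ ψ A) = x \ (A ⊔ ψ A) := by
  rw [swapAlongFun, sup_sdiff, sup_sdiff, sdiff_idem,
    sdiff_eq_bot_iff.2 ((map_inf_le_map_right x).trans le_sup_right),
    sdiff_eq_bot_iff.2 ((symm_apply_inf_map_le x).trans le_sup_left), sup_bot_eq, sup_bot_eq]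

lemma swapAlongFun_swapAlongFun (hA : Disjoint A (ψ A)) (x : B) :
    swapAlongFun ψ A (swapAlongFun ψ A x) = x := by
  conv_lhs => rw [swapAlongFun]
  rw [swapAlongFun_sdiff, swapAlongFun_inf_left hA, swapAlongFun_inf_right hA, apply_symm_apply,
    symm_apply_apply, sup_assoc, sup_comm (x ⊓ ψ A), ← inf_sup_left, sup_sdiff_inf]

def swapAlong (hA : Disjoint A (ψ A)) : B ≃o B :=
  Equiv.toOrderIso ⟨swapAlongFun ψ A, swapAlongFun ψ A, swapAlongFun_swapAlongFun hA,
    swapAlongFun_swapAlongFun hA⟩ (swapAlongFun_mono ψ A) (swapAlongFun_mono ψ A)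

lemma swapAlong_apply (hA : Disjoint A (ψ A)) (x : B) :
    swapAlong hA x = x \ (A ⊔ ψ A) ⊔ ψ (x ⊓ A) ⊔ ψ.symm (x ⊓ ψ A) := rfl

lemma swapAlong_apply_le (hA : Disjoint A (ψ A)) (x : B) : swapAlong hA x ≤ x ⊔ (A ⊔ ψ A) :=
  sup_le (sup_le (sdiff_le.trans le_sup_left)
      ((map_inf_le_map_right x).trans (le_sup_right.trans le_sup_right)))
    ((symm_apply_inf_map_le x).trans (le_sup_left.trans le_sup_right))

lemma le_swapAlong_apply (hA : Disjoint A (ψ A)) {x : B} (hx : A ≤ x) :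
    ψ A ≤ swapAlong hA x := by
  rw [swapAlong_apply, inf_eq_right.2 hx]
  exact le_sup_right.trans le_sup_left

lemma swapAlong_apply_of_le (hA : Disjoint A (ψ A)) {j : B} (hj : A ⊔ ψ A ≤ j) :
    swapAlong hA j = j := by
  rw [swapAlong_apply, inf_eq_right.2 (le_sup_left.trans hj),
    inf_eq_right.2 (le_sup_right.trans hj), symm_apply_apply, sup_assoc, sup_comm (ψ A),
    sdiff_sup_cancel hj]

end Swap

end OrderIso

section Orbit

variable {T : Type*}

def PreservesMeasOn (μ : B → T) (j : B) (φ : B ≃o B) : Prop :=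
  (∀ x : B, x ≤ j → μ (φ x) = μ x) ∧ φ j = j

def measOrbit (μ : B → T) (a : B) : Set B :=
  (fun φ : B ≃o B => φ a) '' {φ | PreservesMeas μ φ}

def measOrbitOn (μ : B → T) (j a : B) : Set B :=
  (fun φ : B ≃o B => φ a) '' {φ | PreservesMeasOn μ j φ}

lemma actsMinimally_iff_forall_top_mem_supClosure {μ : B → T} :
    ActsMinimally μ ↔ ∀ a : B, IsProperElem a → ⊤ ∈ supClosure (measOrbit μ a) :=
  forall₂_congr fun a ha => exists_fin_sup_eq_iff_mem_supClosure (G := {φ | PreservesMeas μ φ})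
    (f := fun φ : B ≃o B => φ a) (ne_bot_of_le_ne_bot ha.1 le_top)

lemma actsMinimallyOn_iff_forall_mem_supClosure {μ : B → T} {j : B} :
    ActsMinimallyOn μ j ↔
      ∀ a : B, a ≤ j → a ≠ ⊥ → a ≠ j → j ∈ supClosure (measOrbitOn μ j a) :=
  forall₄_congr fun a haj ha _ => exists_fin_sup_eq_iff_mem_supClosure
    (G := {φ | PreservesMeasOn μ j φ}) (f := fun φ : B ≃o B => φ a)
    (ne_bot_of_le_ne_bot ha haj)

end Orbit

section Measure

open OrderIso

variable {μ : B → S}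

lemma IsBAMeasure.apply_sup_sup (hμ : IsBAMeasure μ) {u v w : B} (huv : Disjoint u v)
    (huw : Disjoint u w) (hvw : Disjoint v w) : μ (u ⊔ v ⊔ w) = μ u + μ v + μ w := by
  rw [hμ.2 _ _ (huw.sup_left hvw), hμ.2 _ _ huv]

lemma IsBAMeasure.preservesMeas_glueId (hμ : IsBAMeasure μ) {φ : B ≃o B} {j : B}
    (hφ : PreservesMeasOn μ j φ) : PreservesMeas μ (glueId φ j hφ.2) := fun x => by
  have hle : φ (x ⊓ j) ≤ j := (φ.monotone inf_le_right).trans hφ.2.le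
  rw [glueId_apply, hμ.2 _ _ (disjoint_sdiff_self_right.mono_left hle), hφ.1 _ inf_le_right,
    ← hμ.2 _ _ (disjoint_sdiff_self_right.mono_left inf_le_right), sup_inf_sdiff]

lemma IsBAMeasure.preservesMeas_swapAlong (hμ : IsBAMeasure μ) {ψ : B ≃o B}
    (hψ : PreservesMeas μ ψ) {A : B} (hA : Disjoint A (ψ A)) :
    PreservesMeas μ (swapAlong hA) := fun x => by
  have hψ' : μ (ψ.symm (x ⊓ ψ A)) = μ (x ⊓ ψ A) := by rw [← hψ, apply_symm_apply]
  have hx : x = x \ (A ⊔ ψ A) ⊔ x ⊓ A ⊔ x ⊓ ψ A := by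
    rw [sup_assoc, ← inf_sup_left, sup_sdiff_inf]
  rw [swapAlong_apply, hμ.apply_sup_sup
      (disjoint_sdiff_self_left.mono_right ((map_inf_le_map_right x).trans le_sup_right))
      (disjoint_sdiff_self_left.mono_right ((symm_apply_inf_map_le x).trans le_sup_left))
      (hA.symm.mono (map_inf_le_map_right x) (symm_apply_inf_map_le x)),
    hψ, hψ', ← hμ.apply_sup_sup
      (disjoint_sdiff_self_left.mono_right (inf_le_right.trans le_sup_left))
      (disjoint_sdiff_self_left.mono_right (inf_le_right.trans le_sup_right))
      (hA.mono inf_le_right inf_le_right), ← hx]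

lemma IsBAMeasure.exists_preservesMeasOn_between (hμ : IsBAMeasure μ) {ψ : B ≃o B}
    (hψ : PreservesMeas μ ψ) {a c j : B} (haj : a ≤ j) (hcj : c ≤ j) (hc : c ≤ ψ a)
    (hac : Disjoint a c) :
    ∃ σ : B ≃o B, PreservesMeasOn μ j σ ∧ c ≤ σ a ∧ σ a ≤ a ⊔ c := by
  have hψc : ψ (ψ.symm c) = c := ψ.apply_symm_apply c
  have hca : ψ.symm c ≤ a := ψ.symm_apply_le.2 hc
  have hA : Disjoint (ψ.symm c) (ψ (ψ.symm c)) := by rw [hψc]; exact hac.mono_left hca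
  have hAj : ψ.symm c ⊔ ψ (ψ.symm c) ≤ j := by rw [hψc]; exact sup_le (hca.trans haj) hcj
  refine ⟨swapAlong hA, ⟨fun x _ => hμ.preservesMeas_swapAlong hψ hA x,
    swapAlong_apply_of_le hA hAj⟩, hψc.symm.trans_le (le_swapAlong_apply hA hca), ?_⟩
  calc swapAlong hA a ≤ a ⊔ (ψ.symm c ⊔ ψ (ψ.symm c)) := swapAlong_apply_le hA a
    _ = a ⊔ c := by rw [hψc, ← sup_assoc, sup_eq_left.2 hca]

lemma IsBAMeasure.measOrbitOn_subset_measOrbit (hμ : IsBAMeasure μ) {j a : B} (haj : a ≤ j) :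
    measOrbitOn μ j a ⊆ measOrbit μ a := by
  rintro _ ⟨φ, hφ, rfl⟩
  exact ⟨glueId φ j hφ.2, hμ.preservesMeas_glueId hφ, glueId_apply_of_le φ hφ.2 haj⟩

theorem ActsTransitively.actsTransitivelyOn (hμ : IsBAMeasure μ) (h : ActsTransitively μ)
    (j : B) : ActsTransitivelyOn μ j := by
  intro a b haj hbj ha haj' hb hbj'
  by_cases hab : Disjoint a b
  · obtain ⟨ψ, hψ, hne⟩ :=
      h a b ⟨ha, (haj.lt_of_ne haj').ne_top⟩ ⟨hb, (hbj.lt_of_ne hbj').ne_top⟩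
    obtain ⟨σ, hσ, hcσ, -⟩ := hμ.exists_preservesMeasOn_between hψ haj
      (inf_le_right.trans hbj) inf_le_left (hab.mono_right inf_le_right)
    exact ⟨σ, hσ.1, hσ.2, ne_bot_of_le_ne_bot hne (le_inf hcσ inf_le_right)⟩
  · exact ⟨OrderIso.refl B, fun _ _ => rfl, rfl, fun h => hab (disjoint_iff.2 h)⟩

theorem actsTransitively_of_forall_actsTransitivelyOn
    (hatomless : ∀ a : B, a ≠ ⊥ → ∃ b : B, b ≠ ⊥ ∧ b < a) (hμ : IsBAMeasure μ)
    (h : ∀ j : B, IsProperElem j → ActsTransitivelyOn μ j) : ActsTransitively μ := by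
  intro a b ha hb
  by_cases hab : Disjoint a b
  · obtain ⟨e, e', he, he', hee', rfl⟩ := exists_disjoint_sup_eq_of_atomless hatomless hb.1
    have hae : Disjoint a e := hab.mono_right le_sup_left
    have hae' : Disjoint a e' := hab.mono_right le_sup_right
    obtain ⟨φ, hφμ, hφj, hne⟩ :=
      h (a ⊔ e) (isProperElem_sup_of_disjoint ha.1 he' (hae'.sup_left hee')) a e le_sup_left
        le_sup_right ha.1 (ne_sup_of_disjoint he hae) he
        (sup_comm a e ▸ ne_sup_of_disjoint ha.1 hae.symm)
    refine ⟨glueId φ (a ⊔ e) hφj, hμ.preservesMeas_glueId ⟨hφμ, hφj⟩, ?_⟩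
    rw [glueId_apply_of_le φ hφj le_sup_left]
    exact ne_bot_of_le_ne_bot hne (inf_le_inf_left _ le_sup_left)
  · exact ⟨OrderIso.refl B, fun _ => rfl, fun h => hab (disjoint_iff.2 h)⟩

theorem ActsMinimally.actsMinimallyOn (hμ : IsBAMeasure μ) (h : ActsMinimally μ) (j : B) :
    ActsMinimallyOn μ j := by
  rw [actsMinimallyOn_iff_forall_mem_supClosure]
  intro a haj ha haj'
  have htop :=
    actsMinimally_iff_forall_top_mem_supClosure.1 h a ⟨ha, (haj.lt_of_ne haj').ne_top⟩
  have hsub : (fun y => a ⊔ j ⊓ y) '' measOrbit μ a ⊆ supClosure (measOrbitOn μ j a) := by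
    rintro _ ⟨_, ⟨ψ, hψ, rfl⟩, rfl⟩
    obtain ⟨σ, hσ, hcσ, hσc⟩ := hμ.exists_preservesMeasOn_between hψ haj
      (sdiff_le.trans inf_le_left) (sdiff_le.trans inf_le_right) disjoint_sdiff_self_right
    have hσa : a ⊔ j ⊓ ψ a = a ⊔ σ a := by
      rw [← sup_sdiff_self_right]
      exact le_antisymm (sup_le_sup_left hcσ _) (sup_le le_sup_left hσc)
    show a ⊔ j ⊓ ψ a ∈ _
    rw [hσa]
    exact sup_mem_supClosure ⟨OrderIso.refl B, ⟨fun _ _ => rfl, rfl⟩, rfl⟩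
      ⟨σ, hσ, rfl⟩
  have hj := image_supClosure_subset (fun x y => by rw [inf_sup_left, sup_sup_distrib_left])
    (measOrbit μ a) (Set.mem_image_of_mem (fun y => a ⊔ j ⊓ y) htop)
  rw [inf_top_eq, sup_eq_right.2 haj] at hj
  exact supClosure_min hsub supClosed_supClosure hj

theorem actsMinimally_of_forall_actsMinimallyOn
    (hatomless : ∀ a : B, a ≠ ⊥ → ∃ b : B, b ≠ ⊥ ∧ b < a) (hμ : IsBAMeasure μ)
    (h : ∀ j : B, IsProperElem j → ActsMinimallyOn μ j) : ActsMinimally μ := by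
  rw [actsMinimally_iff_forall_top_mem_supClosure]
  intro a ha
  have hcover : ∀ e e' : B, e ≠ ⊥ → e' ≠ ⊥ → Disjoint e e' → e ⊔ e' = aᶜ →
      a ⊔ e ∈ supClosure (measOrbit μ a) := by
    intro e e' he he' hee' hsup
    have hae : Disjoint a e := disjoint_compl_right.mono_right (hsup ▸ le_sup_left)
    have hae' : Disjoint a e' := disjoint_compl_right.mono_right (hsup ▸ le_sup_right)
    have hj := isProperElem_sup_of_disjoint ha.1 he' (hae'.sup_left hee')
    exact supClosure_mono (hμ.measOrbitOn_subset_measOrbit le_sup_left)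
      (actsMinimallyOn_iff_forall_mem_supClosure.1 (h _ hj) a le_sup_left ha.1
        (ne_sup_of_disjoint he hae))
  obtain ⟨e, e', he, he', hee', hsup⟩ :=
    exists_disjoint_sup_eq_of_atomless hatomless fun h => ha.2 (compl_eq_bot.1 h)
  have htop := supClosed_supClosure (hcover e e' he he' hee' hsup)
    (hcover e' e he' he hee'.symm (sup_comm e' e ▸ hsup))
  rwa [← sup_sup_distrib_left, hsup, sup_compl_eq_top] at htop

end Measure

theorem transitive_minimal_hereditary_general
    (hatomless : ∀ a : B, a ≠ ⊥ → ∃ b : B, b ≠ ⊥ ∧ b < a)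
    (μ : B → S) (hμ : IsBAMeasure μ) :
    (ActsTransitively μ ↔ ∀ j : B, IsProperElem j → ActsTransitivelyOn μ j) ∧
    (ActsMinimally μ ↔ ∀ j : B, IsProperElem j → ActsMinimallyOn μ j) :=
  ⟨⟨fun h j _ => h.actsTransitivelyOn hμ j,
      actsTransitively_of_forall_actsTransitivelyOn hatomless hμ⟩,
    ⟨fun h j _ => h.actsMinimallyOn hμ j,
      actsMinimally_of_forall_actsMinimallyOn hatomless hμ⟩⟩

/-- the action of `Aut(μ)` is transitive (resp. minimal) iff for
every proper `j` the action of `Aut(μ ↾ j)` on `B ↾ j` is transitive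
(resp. minimal). -/
theorem transitive_minimal_hereditary [Countable B] [Nontrivial B]
    (hatomless : ∀ a : B, a ≠ ⊥ → ∃ b : B, b ≠ ⊥ ∧ b < a)
    (μ : B → S) (hμ : IsBAMeasure μ) :
    (ActsTransitively μ ↔ ∀ j : B, IsProperElem j → ActsTransitivelyOn μ j) ∧
    (ActsMinimally μ ↔ ∀ j : B, IsProperElem j → ActsMinimallyOn μ j) :=
  transitive_minimal_hereditary_general hatomless μ hμ
end

section
/- Let μ be a solid S-valued measure on 𝔹 (homogeneous, with Aut(μ) acting transitively). Then for any two proper elements a, b of 𝔹 there exists φ ∈ Aut(μ) such that each of φ(a)∧b, φ(a)∖b, b∖φ(a), and 1∖(φ(a)∨b) is nonzero. -/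
variable {B : Type*} [BooleanAlgebra B] {S : Type*} [AddCommMonoid S]

/-- `μ` is solid: homogeneous and `Aut(μ)` acts transitively. -/
def MeasSolid (μ : B → S) : Prop := MeasHomogeneous μ ∧ ActsTransitively μ

/-!
Homogeneity reduces the problem to finding an element `w` with `μ w = μ a`, `μ wᶜ = μ aᶜ` in
general position with respect to `b`. If `a` is not already in general position, then some
`c ∈ {b, bᶜ}` lies below some `z ∈ {a, aᶜ}`. Transitivity moves `c` to meet `zᶜ`, giving
nonzero `v < θ c ⊓ zᶜ` whose preimage `u = θ⁻¹ v` lies strictly below `c` and has the same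
measure; exchanging `u` for `v` inside `z` keeps both measures and cuts all four pieces.
-/

def InGeneralPosition (x y : B) : Prop :=
  x ⊓ y ≠ ⊥ ∧ x ⊓ yᶜ ≠ ⊥ ∧ xᶜ ⊓ y ≠ ⊥ ∧ xᶜ ⊓ yᶜ ≠ ⊥

theorem InGeneralPosition.compl_left {x y : B} (h : InGeneralPosition x y) :
    InGeneralPosition xᶜ y := by
  obtain ⟨h₁, h₂, h₃, h₄⟩ := h
  exact ⟨h₃, h₄, by rwa [compl_compl], by rwa [compl_compl]⟩

theorem InGeneralPosition.of_compl_right {x y : B} (h : InGeneralPosition x yᶜ) :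
    InGeneralPosition x y := by
  obtain ⟨h₁, h₂, h₃, h₄⟩ := h
  rw [compl_compl] at h₂ h₄
  exact ⟨h₂, h₁, h₄, h₃⟩

theorem InGeneralPosition.isProperElem {x y : B} (h : InGeneralPosition x y) :
    IsProperElem x :=
  ⟨ne_bot_of_le_ne_bot h.1 inf_le_left,
    fun hx => h.2.2.1 (by rw [hx, compl_top, bot_inf_eq])⟩

theorem InGeneralPosition.pieces_ne_bot {x y : B} (h : InGeneralPosition x y) :
    x ⊓ y ≠ ⊥ ∧ x \ y ≠ ⊥ ∧ y \ x ≠ ⊥ ∧ (x ⊔ y)ᶜ ≠ ⊥ := by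
  rw [sdiff_eq, sdiff_eq, inf_comm y, compl_sup]
  exact h

theorem compl_sdiff_sup {z u v : B} (hu : u ≤ z) (hv : v ≤ zᶜ) :
    (z \ u ⊔ v)ᶜ = zᶜ \ v ⊔ u := by
  rw [sdiff_eq, sdiff_eq, compl_sup, compl_inf, compl_compl, inf_sup_right,
    inf_eq_left.2 (hu.trans (le_compl_comm.1 hv))]

/-- `x ↦ y` extends to a partial `μ`-isomorphism `{⊥, x, xᶜ, ⊤} → {⊥, y, yᶜ, ⊤}`. -/
def MeasCongr {T : Type*} (μ : B → T) (x y : B) : Prop := μ x = μ y ∧ μ xᶜ = μ yᶜ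

theorem MeasCongr.compl {T : Type*} {μ : B → T} {x y : B} (h : MeasCongr μ x y) :
    MeasCongr μ xᶜ yᶜ :=
  ⟨h.2, by rw [compl_compl, compl_compl]; exact h.1⟩

theorem IsBAMeasure.map_sdiff_sup {μ : B → S} (hμ : IsBAMeasure μ) {z u v : B} (hu : u ≤ z)
    (hv : Disjoint z v) (huv : μ u = μ v) : μ (z \ u ⊔ v) = μ z := by
  rw [hμ.2 _ _ (hv.mono_left sdiff_le), ← huv, ← hμ.2 _ _ disjoint_sdiff_self_left,
    sdiff_sup_cancel hu]

theorem measCongr_sdiff_sup {μ : B → S} (hμ : IsBAMeasure μ) {z u v : B} (hu : u ≤ z)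
    (hv : v ≤ zᶜ) (huv : μ u = μ v) : MeasCongr μ (z \ u ⊔ v) z := by
  refine ⟨hμ.map_sdiff_sup hu (le_compl_iff_disjoint_left.1 hv) huv, ?_⟩
  rw [compl_sdiff_sup hu hv]
  exact hμ.map_sdiff_sup hv (disjoint_compl_left_iff.2 hu) huv.symm

theorem exists_measCongr_inGeneralPosition_of_le
    (hatomless : ∀ a : B, a ≠ ⊥ → ∃ b : B, b ≠ ⊥ ∧ b < a)
    {μ : B → S} (hμ : IsBAMeasure μ) (htrans : ActsTransitively μ)
    {c z : B} (hc : c ≠ ⊥) (hcz : c ≤ z) (hz : z ≠ ⊤) :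
    ∃ w, MeasCongr μ w z ∧ InGeneralPosition w c := by
  have hzc : IsProperElem zᶜ :=
    ⟨fun h => hz (compl_eq_bot.1 h), fun h => ne_bot_of_le_ne_bot hc hcz (compl_eq_top.1 h)⟩
  obtain ⟨θ, hθ, hθc⟩ := htrans c zᶜ ⟨hc, ne_top_of_le_ne_top hz hcz⟩ hzc
  obtain ⟨v, hv, hvlt⟩ := hatomless _ hθc
  set u := θ.symm v
  have hvz : v ≤ zᶜ := hvlt.le.trans inf_le_right
  have huc : u < c := θ.symm_apply_lt.2 (hvlt.trans_le inf_le_left)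
  have hu : u ≠ ⊥ := fun h =>
    hv ((θ.apply_symm_apply v).symm.trans ((congrArg θ h).trans (map_bot θ)))
  have huv : μ u = μ v := by rw [← hθ u, θ.apply_symm_apply]
  have hwc : (z \ u ⊔ v)ᶜ = zᶜ \ v ⊔ u := compl_sdiff_sup (huc.le.trans hcz) hvz
  -- the four pieces contain `c \ u`, `v`, `u` and `(θ c ⊓ zᶜ) \ v` respectively
  refine ⟨z \ u ⊔ v, measCongr_sdiff_sup hμ (huc.le.trans hcz) hvz huv, ?_, ?_, ?_, ?_⟩
  · refine ne_bot_of_le_ne_bot (b := c \ u) (fun h => huc.not_ge (sdiff_eq_bot_iff.1 h)) ?_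
    exact le_inf ((sdiff_le_sdiff_right hcz).trans le_sup_left) sdiff_le
  · exact ne_bot_of_le_ne_bot hv (le_inf le_sup_right (hvz.trans (compl_le_compl hcz)))
  · exact ne_bot_of_le_ne_bot hu (le_inf (hwc ▸ le_sup_right) huc.le)
  · refine ne_bot_of_le_ne_bot (b := (θ c ⊓ zᶜ) \ v)
      (fun h => hvlt.not_ge (sdiff_eq_bot_iff.1 h)) (le_inf ?_ ?_)
    · exact hwc ▸ (sdiff_le_sdiff_right inf_le_right).trans le_sup_left
    · exact sdiff_le.trans (inf_le_right.trans (compl_le_compl hcz))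

theorem exists_measCongr_inGeneralPosition
    (hatomless : ∀ a : B, a ≠ ⊥ → ∃ b : B, b ≠ ⊥ ∧ b < a)
    {μ : B → S} (hμ : IsBAMeasure μ) (htrans : ActsTransitively μ)
    {a b : B} (ha : IsProperElem a) (hb : IsProperElem b) :
    ∃ w, MeasCongr μ w a ∧ InGeneralPosition w b := by
  have key {c z : B} := exists_measCongr_inGeneralPosition_of_le (c := c) (z := z)
    hatomless hμ htrans
  have hac : aᶜ ≠ ⊤ := fun h => ha.1 (compl_eq_top.1 h)
  have hbc : bᶜ ≠ ⊥ := fun h => hb.2 (compl_eq_bot.1 h)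
  have of_compl {w : B} (hw : MeasCongr μ w aᶜ) (hwb : InGeneralPosition w b) :
      ∃ w, MeasCongr μ w a ∧ InGeneralPosition w b :=
    ⟨wᶜ, compl_compl a ▸ hw.compl, hwb.compl_left⟩
  by_cases hab : InGeneralPosition a b
  · exact ⟨a, ⟨rfl, rfl⟩, hab⟩
  simp only [InGeneralPosition, not_and_or, not_not, ← disjoint_iff] at hab
  rcases hab with h | h | h | h
  · obtain ⟨w, hw, hwb⟩ := key hb.1 (le_compl_iff_disjoint_left.2 h) hac
    exact of_compl hw hwb
  · obtain ⟨w, hw, hwb⟩ := key hbc (le_compl_iff_disjoint_left.2 h) hac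
    exact of_compl hw hwb.of_compl_right
  · exact key hb.1 (disjoint_compl_left_iff.1 h) ha.2
  · obtain ⟨w, hw, hwb⟩ := key hbc (disjoint_compl_left_iff.1 h) ha.2
    exact ⟨w, hw, hwb.of_compl_right⟩

theorem solid_four_nonzero_pieces_general
    (hatomless : ∀ a : B, a ≠ ⊥ → ∃ b : B, b ≠ ⊥ ∧ b < a)
    (μ : B → S) (hμ : IsBAMeasure μ) (hsolid : MeasSolid μ) :
    ∀ a b : B, IsProperElem a → IsProperElem b →
      ∃ φ : B ≃o B, PreservesMeas μ φ ∧
        φ a ⊓ b ≠ ⊥ ∧ φ a \ b ≠ ⊥ ∧ b \ φ a ≠ ⊥ ∧ (φ a ⊔ b)ᶜ ≠ ⊥ := by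
  intro a b ha hb
  obtain ⟨w, hwa, hwb⟩ := exists_measCongr_inGeneralPosition hatomless hμ hsolid.2 ha hb
  obtain ⟨φ, hφ, rfl⟩ := hsolid.1 a w ha hwb.isProperElem hwa.1.symm hwa.2.symm
  exact ⟨φ, hφ, hwb.pieces_ne_bot⟩

/-- if `μ` is solid, then for any two proper `a`, `b` there is a
`μ`-automorphism `φ` such that `φ a ⊓ b`, `φ a \ b`, `b \ φ a` and
`(φ a ⊔ b)ᶜ` are all nonzero. -/
theorem solid_four_nonzero_pieces [Countable B] [Nontrivial B]
    (hatomless : ∀ a : B, a ≠ ⊥ → ∃ b : B, b ≠ ⊥ ∧ b < a)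
    (μ : B → S) (hμ : IsBAMeasure μ) (hsolid : MeasSolid μ) :
    ∀ a b : B, IsProperElem a → IsProperElem b →
      ∃ φ : B ≃o B, PreservesMeas μ φ ∧
        φ a ⊓ b ≠ ⊥ ∧ φ a \ b ≠ ⊥ ∧ b \ φ a ≠ ⊥ ∧ (φ a ⊔ b)ᶜ ≠ ⊥ :=
  solid_four_nonzero_pieces_general hatomless μ hμ hsolid
end

section
/- Let μ be a homogeneous S-valued measure on 𝔹 with trinary spectrum Σ, and let a, b be proper elements of 𝔹. Then there exists φ ∈ Aut(μ) with φ(a)∧b = b and φ(a) ≠ b if and only if there exists x ∈ S such that (μ(b), x, μ(1∖a)) ∈ Σ, x + μ(b) = μ(a), and x + μ(1∖a) = μ(1∖b). -/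
/-!
If `b < φ a`, the pieces `b`, `φ a \ b`, `(φ a)ᶜ` form a partition, and `x := μ (φ a \ b)` is the
required witness. Conversely, take a partition `{p, q, r}` realising `(μ b, x, μ aᶜ)`. The two
equations make `p ↦ b` a partial `μ`-isomorphism, so homogeneity gives `ψ` with `ψ p = b`; then
`d := ψ (p ⊔ q)` lies strictly above `b` and has the same measure and co-measure as `a`, so a
second use of homogeneity sends `a` to `d`.
-/

variable {B : Type*} [BooleanAlgebra B] {S : Type*} [AddCommMonoid S]

theorem IsPartition3.isCompl_left_s8 {a b c : B} (h : IsPartition3 a b c) : IsCompl a (b ⊔ c) := by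
  obtain ⟨-, -, -, hab, hac, -, hsup⟩ := h
  exact ⟨hab.sup_right hac, codisjoint_iff.mpr (sup_assoc a b c ▸ hsup)⟩

theorem IsPartition3.isCompl_right {a b c : B} (h : IsPartition3 a b c) : IsCompl (a ⊔ b) c := by
  obtain ⟨-, -, -, -, hac, hbc, hsup⟩ := h
  exact ⟨hac.sup_left hbc, codisjoint_iff.mpr hsup⟩

theorem isPartition3_sdiff {b d : B} (hb : b ≠ ⊥) (hbd : b < d) (hd : d ≠ ⊤) :
    IsPartition3 b (d \ b) dᶜ :=
  ⟨hb, sdiff_eq_bot_iff.not.mpr hbd.not_ge, compl_eq_bot.not.mpr hd, disjoint_sdiff_self_right,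
    disjoint_compl_right.mono_left hbd.le, disjoint_compl_right.mono_left sdiff_le,
    by rw [sup_sdiff_cancel_right hbd.le, sup_compl_eq_top]⟩

theorem PreservesMeas.map_compl {T : Type*} {μ : B → T} {φ : B ≃o B}
    (hφ : PreservesMeas μ φ) (a : B) : μ (φ a)ᶜ = μ aᶜ := by
  rw [← map_compl' φ a, hφ]

theorem exists_mem_trinarySpectrum_of_lt {μ : B → S} (hμ : IsBAMeasure μ) {b d : B}
    (hb : b ≠ ⊥) (hbd : b < d) (hd : d ≠ ⊤) :
    ∃ x : S, (μ b, x, μ dᶜ) ∈ TrinarySpectrum μ ∧ x + μ b = μ d ∧ x + μ dᶜ = μ bᶜ := by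
  have hpart := isPartition3_sdiff hb hbd hd
  refine ⟨μ (d \ b), ⟨b, d \ b, dᶜ, hpart, rfl⟩, ?_, ?_⟩
  · rw [add_comm, ← hμ.2 _ _ disjoint_sdiff_self_right, sup_sdiff_cancel_right hbd.le]
  · rw [← hμ.2 _ _ (disjoint_compl_right.mono_left sdiff_le), hpart.isCompl_left_s8.compl_eq]

theorem exists_lt_of_mem_trinarySpectrum {μ : B → S} (hμ : IsBAMeasure μ)
    (hhom : MeasHomogeneous μ) {b : B} (hb : IsProperElem b) {x y : S}
    (hspec : (μ b, x, y) ∈ TrinarySpectrum μ) (hxy : x + y = μ bᶜ) :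
    ∃ d : B, b < d ∧ d ≠ ⊤ ∧ μ d = x + μ b ∧ μ dᶜ = y := by
  obtain ⟨p, q, r, hpart, heq⟩ := hspec
  obtain ⟨hμp, rfl, rfl⟩ : μ b = μ p ∧ x = μ q ∧ y = μ r := by simpa using heq
  obtain ⟨hp0, hq0, hr0, hpq, -, hqr, -⟩ := id hpart
  have hp : IsProperElem p := ⟨hp0, fun h => hq0 (hpq.symm.eq_bot_of_le (h ▸ le_top))⟩
  have hμpc : μ pᶜ = μ bᶜ := by rw [hpart.isCompl_left_s8.compl_eq, hμ.2 _ _ hqr, hxy]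
  obtain ⟨ψ, hψ, rfl⟩ := hhom p b hp hb hμp.symm hμpc
  have hp_lt : p < p ⊔ q := left_lt_sup.mpr fun h => hq0 (hpq.symm.eq_bot_of_le h)
  have hpq_ne_top : p ⊔ q ≠ ⊤ := by
    rwa [Ne, ← compl_eq_bot, hpart.isCompl_right.compl_eq]
  refine ⟨ψ (p ⊔ q), ψ.lt_iff_lt.mpr hp_lt, by rwa [Ne, map_eq_top_iff], ?_, ?_⟩
  · rw [hψ, hμ.2 _ _ hpq, hψ, add_comm]
  · rw [hψ.map_compl, hpart.isCompl_right.compl_eq]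

theorem strictly_below_iff_spectrum_general
    (μ : B → S) (hμ : IsBAMeasure μ) (hhom : MeasHomogeneous μ)
    (a b : B) (ha : IsProperElem a) (hb : IsProperElem b) :
    (∃ φ : B ≃o B, PreservesMeas μ φ ∧ φ a ⊓ b = b ∧ φ a ≠ b) ↔
    (∃ x : S, (μ b, x, μ aᶜ) ∈ TrinarySpectrum μ ∧
      x + μ b = μ a ∧ x + μ aᶜ = μ bᶜ) := by
  constructor
  · rintro ⟨φ, hφ, hinf, hne⟩
    have hlt : b < φ a := lt_of_le_of_ne (inf_eq_right.mp hinf) (Ne.symm hne)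
    have htop : φ a ≠ ⊤ := by simpa using ha.2
    simpa only [hφ a, hφ.map_compl] using exists_mem_trinarySpectrum_of_lt hμ hb.1 hlt htop
  · rintro ⟨x, hspec, hxb, hxa⟩
    obtain ⟨d, hbd, hd, hμd, hμdc⟩ := exists_lt_of_mem_trinarySpectrum hμ hhom hb hspec hxa
    obtain ⟨φ, hφ, rfl⟩ :=
      hhom a d ha ⟨ne_bot_of_gt hbd, hd⟩ (hxb ▸ hμd.symm) hμdc.symm
    exact ⟨φ, hφ, inf_eq_right.mpr hbd.le, hbd.ne'⟩

/-- for proper `a`, `b`, there is `φ ∈ Aut(μ)` with `b` strictly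
below `φ a` iff there is `x ∈ S` with `(μ b, x, μ aᶜ) ∈ Σ(μ)`,
`x + μ b = μ a` and `x + μ aᶜ = μ bᶜ`. -/
theorem strictly_below_iff_spectrum [Countable B] [Nontrivial B]
    (hatomless : ∀ a : B, a ≠ ⊥ → ∃ b : B, b ≠ ⊥ ∧ b < a)
    (μ : B → S) (hμ : IsBAMeasure μ) (hhom : MeasHomogeneous μ)
    (a b : B) (ha : IsProperElem a) (hb : IsProperElem b) :
    (∃ φ : B ≃o B, PreservesMeas μ φ ∧ φ a ⊓ b = b ∧ φ a ≠ b) ↔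
    (∃ x : S, (μ b, x, μ aᶜ) ∈ TrinarySpectrum μ ∧
      x + μ b = μ a ∧ x + μ aᶜ = μ bᶜ) :=
  strictly_below_iff_spectrum_general μ hμ hhom a b ha hb
end

section
/- Let μ: 𝔹 → S be a homogeneous semigroup-valued measure such that μ(z) = 0_S for some proper element z ∈ 𝔹. Then G := {μ(a) : a ∈ 𝔹↾z} is a subgroup of the group of invertible elements of S, and for every nonzero j ∈ 𝔹 with μ(j) ∈ G, the restriction μ↾j is G-filling: for every g ∈ G and every nonempty proper a ∈ 𝔹↾j there is a nonzero b strictly below a with μ(b) = g. -/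
variable {B : Type*} [BooleanAlgebra B] {S : Type*} [AddCommMonoid S]

/-- `μ ↾ j` is `G`-filling: for every `g ∈ G` and every nonempty proper
`a ∈ B ↾ j` there is a nonzero `b` strictly below `a` with `μ b = g`. -/
def GFillingOn (μ : B → S) (j : B) (G : Set S) : Prop :=
  ∀ g ∈ G, ∀ a : B, a ≤ j → a ≠ ⊥ → a ≠ j →
    ∃ b : B, b ≠ ⊥ ∧ b ≤ a ∧ b ≠ a ∧ μ b = g

/-!
A null element `x` has `μ xᶜ = μ ⊤`, so homogeneity moves any proper null element onto any
other. Padding a nonzero `a` by a disjoint null `v` with `a ⊔ v ≠ ⊤` and mapping `a ⊔ v` back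
onto `a` yields a nonzero null element strictly below `a`. With `v = z` and atomlessness this
gives one below every nonzero `x ≤ zᶜ`; since `a` or `aᶜ` meets `zᶜ`, padding once more gives
one below every proper `a`. Mapping `z` onto such an element
transports every value of `G = μ '' Iic z` strictly below any proper `a`, which is the filling
property. Inside `z \ w` it also gives closure of `G` under addition, while
`μ w + μ (z \ w) = μ z = 0` gives inverses.
-/

section

variable {μ : B → S} {z : B}

theorem IsBAMeasure.measure_add_measure_sdiff (hμ : IsBAMeasure μ) {w v : B} (h : w ≤ v) :
    μ w + μ (v \ w) = μ v := by
  rw [← hμ.2 w (v \ w) disjoint_sdiff_self_right, sup_sdiff_cancel_right h]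

theorem IsBAMeasure.measure_compl_of_null (hμ : IsBAMeasure μ) {x : B} (hx : μ x = 0) :
    μ xᶜ = μ ⊤ := by
  rw [← hμ.measure_add_measure_sdiff le_top, hx, zero_add, top_sdiff]

theorem exists_null_lt_of_null_disjoint (hμ : IsBAMeasure μ) (hhom : MeasHomogeneous μ)
    {a v : B} (ha : a ≠ ⊥) (hv : v ≠ ⊥) (hv0 : μ v = 0) (hav : Disjoint a v)
    (hsup : a ⊔ v ≠ ⊤) :
    ∃ b : B, b ≠ ⊥ ∧ b < a ∧ μ b = 0 := by
  have hμsup : μ (a ⊔ v) = μ a := by rw [hμ.2 a v hav, hv0, add_zero]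
  have hμcompl : μ (a ⊔ v)ᶜ = μ aᶜ := by
    rw [compl_sup, ← sdiff_eq, ← hμ.measure_add_measure_sdiff hav.symm.le_compl_right, hv0,
      zero_add]
  obtain ⟨φ, hφμ, hφ⟩ := hhom (a ⊔ v) a ⟨ne_bot_of_le_ne_bot ha le_sup_left, hsup⟩
    ⟨ha, ne_top_of_le_ne_top hsup le_sup_left⟩ hμsup hμcompl
  have hv_lt : v < a ⊔ v := right_lt_sup.2 fun h => ha (hav.eq_bot_of_le h)
  exact ⟨φ v, (map_eq_bot_iff φ).not.2 hv, hφ ▸ φ.strictMono hv_lt, (hφμ v).trans hv0⟩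

theorem exists_null_lt_of_le_compl (hatomless : ∀ a : B, a ≠ ⊥ → ∃ b : B, b ≠ ⊥ ∧ b < a)
    (hμ : IsBAMeasure μ) (hhom : MeasHomogeneous μ) (hz : z ≠ ⊥) (hz0 : μ z = 0)
    {x : B} (hx : x ≠ ⊥) (hxz : x ≤ zᶜ) :
    ∃ b : B, b ≠ ⊥ ∧ b < x ∧ μ b = 0 := by
  obtain ⟨y, hy, hyx⟩ := hatomless x hx
  have hsup : y ⊔ z ≠ ⊤ := fun h =>
    (codisjoint_iff_compl_le_left.1 (codisjoint_iff.2 h)).not_gt (hyx.trans_le hxz)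
  obtain ⟨b, hb, hby, hb0⟩ := exists_null_lt_of_null_disjoint hμ hhom hy hz hz0
    (le_compl_iff_disjoint_right.1 (hyx.le.trans hxz)) hsup
  exact ⟨b, hb, hby.trans hyx, hb0⟩

theorem exists_null_lt (hatomless : ∀ a : B, a ≠ ⊥ → ∃ b : B, b ≠ ⊥ ∧ b < a)
    (hμ : IsBAMeasure μ) (hhom : MeasHomogeneous μ) (hz : IsProperElem z) (hz0 : μ z = 0)
    {a : B} (ha : IsProperElem a) :
    ∃ b : B, b ≠ ⊥ ∧ b < a ∧ μ b = 0 := by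
  have hsplit : a ⊓ zᶜ ≠ ⊥ ∨ aᶜ ⊓ zᶜ ≠ ⊥ := by
    by_contra! h
    have hzc : zᶜ = ⊥ := by rw [← top_inf_eq zᶜ, ← sup_compl_eq_top (x := a), inf_sup_right,
      h.1, h.2, sup_bot_eq]
    exact hz.2 (compl_eq_bot.1 hzc)
  rcases hsplit with h | h
  · obtain ⟨b, hb, hblt, hb0⟩ :=
      exists_null_lt_of_le_compl hatomless hμ hhom hz.1 hz0 h inf_le_right
    exact ⟨b, hb, hblt.trans_le inf_le_left, hb0⟩
  · obtain ⟨v, hv, hvlt, hv0⟩ :=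
      exists_null_lt_of_le_compl hatomless hμ hhom hz.1 hz0 h inf_le_right
    have hva : v < aᶜ := hvlt.trans_le inf_le_left
    exact exists_null_lt_of_null_disjoint hμ hhom ha.1 hv hv0
      (le_compl_iff_disjoint_right.1 hva.le).symm
      fun hsup => (codisjoint_iff_compl_le_right.1 (codisjoint_iff.2 hsup)).not_gt hva

theorem exists_lt_measure_eq_of_mem_image_Iic
    (hatomless : ∀ a : B, a ≠ ⊥ → ∃ b : B, b ≠ ⊥ ∧ b < a)
    (hμ : IsBAMeasure μ) (hhom : MeasHomogeneous μ) (hz : IsProperElem z) (hz0 : μ z = 0)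
    {a : B} (ha : IsProperElem a) {g : S} (hg : g ∈ μ '' Set.Iic z) :
    ∃ b : B, b ≠ ⊥ ∧ b < a ∧ μ b = g := by
  obtain ⟨c, hc, hca, hc0⟩ := exists_null_lt hatomless hμ hhom hz hz0 ha
  obtain ⟨d, hdz, hd, rfl⟩ : ∃ d ≤ z, d ≠ ⊥ ∧ μ d = g := by
    obtain ⟨d, hdz, rfl⟩ := hg
    by_cases hd : d = ⊥
    · exact ⟨z, le_rfl, hz.1, by rw [hz0, hd, hμ.1]⟩
    · exact ⟨d, hdz, hd, rfl⟩
  obtain ⟨φ, hφμ, hφ⟩ := hhom z c hz ⟨hc, ne_top_of_lt hca⟩ (hz0.trans hc0.symm)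
    (by rw [hμ.measure_compl_of_null hz0, hμ.measure_compl_of_null hc0])
  exact ⟨φ d, (map_eq_bot_iff φ).not.2 hd, (hφ ▸ φ.monotone hdz).trans_lt hca, hφμ d⟩

theorem add_mem_image_Iic (hatomless : ∀ a : B, a ≠ ⊥ → ∃ b : B, b ≠ ⊥ ∧ b < a)
    (hμ : IsBAMeasure μ) (hhom : MeasHomogeneous μ) (hz : IsProperElem z) (hz0 : μ z = 0)
    {x y : S} (hx : x ∈ μ '' Set.Iic z) (hy : y ∈ μ '' Set.Iic z) :
    x + y ∈ μ '' Set.Iic z := by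
  obtain ⟨w, hwz, rfl⟩ := hx
  rcases (Set.mem_Iic.1 hwz).lt_or_eq with hwz | rfl
  · have hzw : IsProperElem (z \ w) :=
      ⟨fun h => hwz.not_ge (sdiff_eq_bot_iff.1 h), ne_top_of_le_ne_top hz.2 sdiff_le⟩
    obtain ⟨b, -, hb, rfl⟩ :=
      exists_lt_measure_eq_of_mem_image_Iic hatomless hμ hhom hz hz0 hzw hy
    exact ⟨w ⊔ b, sup_le hwz.le (hb.le.trans sdiff_le),
      hμ.2 w b (disjoint_sdiff_self_right.mono_right hb.le)⟩
  · rwa [hz0, zero_add]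

end

theorem zero_value_gives_subgroup_and_filling_general
    (hatomless : ∀ a : B, a ≠ ⊥ → ∃ b : B, b ≠ ⊥ ∧ b < a)
    (μ : B → S) (hμ : IsBAMeasure μ) (hhom : MeasHomogeneous μ)
    (z : B) (hz : IsProperElem z) (hz0 : μ z = 0) :
    ((0 : S) ∈ μ '' Set.Iic z) ∧
    (∀ x ∈ μ '' Set.Iic z, IsAddUnit x) ∧
    (∀ x ∈ μ '' Set.Iic z, ∀ y ∈ μ '' Set.Iic z, x + y ∈ μ '' Set.Iic z) ∧
    (∀ x ∈ μ '' Set.Iic z, ∃ y ∈ μ '' Set.Iic z, x + y = 0) ∧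
    (∀ j : B, j ≠ ⊥ → μ j ∈ μ '' Set.Iic z → GFillingOn μ j (μ '' Set.Iic z)) := by
  have hneg : ∀ x ∈ μ '' Set.Iic z, ∃ y ∈ μ '' Set.Iic z, x + y = 0 := by
    rintro _ ⟨w, hw, rfl⟩
    exact ⟨μ (z \ w), ⟨z \ w, sdiff_le, rfl⟩, (hμ.measure_add_measure_sdiff hw).trans hz0⟩
  refine ⟨⟨⊥, bot_le, hμ.1⟩, fun x hx => ?_,
    fun x hx y hy => add_mem_image_Iic hatomless hμ hhom hz hz0 hx hy, hneg, ?_⟩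
  · obtain ⟨y, -, hxy⟩ := hneg x hx
    exact IsAddUnit.of_add_eq_zero y hxy
  · intro j _ _ g hg a haj ha haj'
    obtain ⟨b, hb, hba, hbg⟩ := exists_lt_measure_eq_of_mem_image_Iic hatomless hμ hhom hz hz0
      ⟨ha, ne_top_of_lt (lt_of_le_of_ne haj haj')⟩ hg
    exact ⟨b, hb, hba.le, hba.ne, hbg⟩

/-- if `μ` is homogeneous and vanishes at a proper element `z`,
then `G = μ '' (B ↾ z)` is a subgroup of the invertible elements of `S`, and
`μ ↾ j` is `G`-filling for every nonzero `j` with `μ j ∈ G`. -/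
theorem zero_value_gives_subgroup_and_filling [Countable B] [Nontrivial B]
    (hatomless : ∀ a : B, a ≠ ⊥ → ∃ b : B, b ≠ ⊥ ∧ b < a)
    (μ : B → S) (hμ : IsBAMeasure μ) (hhom : MeasHomogeneous μ)
    (z : B) (hz : IsProperElem z) (hz0 : μ z = 0) :
    ((0 : S) ∈ μ '' Set.Iic z) ∧
    (∀ x ∈ μ '' Set.Iic z, IsAddUnit x) ∧
    (∀ x ∈ μ '' Set.Iic z, ∀ y ∈ μ '' Set.Iic z, x + y ∈ μ '' Set.Iic z) ∧
    (∀ x ∈ μ '' Set.Iic z, ∃ y ∈ μ '' Set.Iic z, x + y = 0) ∧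
    (∀ j : B, j ≠ ⊥ → μ j ∈ μ '' Set.Iic z → GFillingOn μ j (μ '' Set.Iic z)) :=
  zero_value_gives_subgroup_and_filling_general hatomless μ hμ hhom z hz hz0
end
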